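/- arXiv:1004.3885 — 6 statements merged into one kernel-verified Lean document; each statement's English description precedes it below -/
import Mathlib

section
/- (Inverse Leibniz formula) For any smooth function u on ℝ^d and multi-indices α, β in ℕ^d, one has x^β ∂^α u(x) = Σ_{γ ≤ β, γ ≤ α} (−1)^{|γ|} (β!/(β−γ)!) C(α,γ) ∂^{α−γ}( x^{β−γ} u(x) ). -/
open scoped BigOperators

/-- `|α| = α_1 + ⋯ + α_d`. -/
def msize {d : ℕ} (α : Fin d → ℕ) : ℕ := ∑ i, α i

/-- Multi-index factorial `α! = α_1! ⋯ α_d!`. -/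
def mfact {d : ℕ} (α : Fin d → ℕ) : ℕ := ∏ i, Nat.factorial (α i)

/-- Multi-index binomial coefficient. -/
def mchoose {d : ℕ} (α β : Fin d → ℕ) : ℕ := ∏ i, Nat.choose (α i) (β i)

/-- Monomial `x^β = x_1^{β_1} ⋯ x_d^{β_d}`. -/
def mpow {d : ℕ} (x : EuclideanSpace ℝ (Fin d)) (β : Fin d → ℕ) : ℝ := ∏ i, (x i) ^ (β i)

/-- The partial derivative `∂_i`. -/
noncomputable def pd1 {d : ℕ} (i : Fin d) (f : EuclideanSpace ℝ (Fin d) → ℝ) :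
    EuclideanSpace ℝ (Fin d) → ℝ :=
  fun x => fderiv ℝ f x (EuclideanSpace.single i 1)

/-- The mixed partial derivative `∂^α = ∂_1^{α_1} ⋯ ∂_d^{α_d}`. -/
noncomputable def pd {d : ℕ} (α : Fin d → ℕ) (f : EuclideanSpace ℝ (Fin d) → ℝ) :
    EuclideanSpace ℝ (Fin d) → ℝ :=
  (List.finRange d).foldr (fun i g => (pd1 i)^[α i] g) f

lemma contDiff_pd1 {d : ℕ} (i : Fin d) {f : EuclideanSpace ℝ (Fin d) → ℝ}
    (hf : ContDiff ℝ (⊤ : ℕ∞) f) : ContDiff ℝ (⊤ : ℕ∞) (pd1 i f) := by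
  have h1 : ContDiff ℝ (⊤ : ℕ∞) (fderiv ℝ f) := hf.fderiv_right (by simp)
  exact (ContinuousLinearMap.apply ℝ ℝ (EuclideanSpace.single i 1)).contDiff.comp h1

lemma contDiff_pd1_iter {d : ℕ} (i : Fin d) (n : ℕ) {f : EuclideanSpace ℝ (Fin d) → ℝ}
    (hf : ContDiff ℝ (⊤ : ℕ∞) f) : ContDiff ℝ (⊤ : ℕ∞) ((pd1 i)^[n] f) := by
  induction n with
  | zero => exact hf
  | succ n ih => rw [Function.iterate_succ_apply']; exact contDiff_pd1 i ih

lemma contDiff_pd {d : ℕ} (α : Fin d → ℕ) {f : EuclideanSpace ℝ (Fin d) → ℝ}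
    (hf : ContDiff ℝ (⊤ : ℕ∞) f) : ContDiff ℝ (⊤ : ℕ∞) (pd α f) := by
  unfold pd
  induction (List.finRange d) with
  | nil => exact hf
  | cons j l ih => exact contDiff_pd1_iter j (α j) ih

lemma pd1_coord_mul {d : ℕ} (i j : Fin d) {f : EuclideanSpace ℝ (Fin d) → ℝ}
    (hf : ContDiff ℝ (⊤ : ℕ∞) f) :
    pd1 j (fun y => y i * f y) = fun x =>
      (if i = j then (1:ℝ) else 0) * f x + x i * pd1 j f x := by
  funext x
  have hci : DifferentiableAt ℝ (fun y : EuclideanSpace ℝ (Fin d) => y i) x :=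
    (EuclideanSpace.proj (𝕜 := ℝ) i).differentiableAt
  have hfd : DifferentiableAt ℝ f x := hf.differentiable (by simp) x
  have hco : fderiv ℝ (fun y : EuclideanSpace ℝ (Fin d) => y i) x
      = EuclideanSpace.proj (𝕜 := ℝ) i :=
    (EuclideanSpace.proj (𝕜 := ℝ) i).fderiv
  unfold pd1
  rw [fderiv_fun_mul hci hfd]
  simp [hco, EuclideanSpace.proj, EuclideanSpace.single_apply]
  ring

lemma pd1_add {d : ℕ} (j : Fin d) {f g : EuclideanSpace ℝ (Fin d) → ℝ}
    (hf : ContDiff ℝ (⊤ : ℕ∞) f) (hg : ContDiff ℝ (⊤ : ℕ∞) g) :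
    pd1 j (fun y => f y + g y) = fun x => pd1 j f x + pd1 j g x := by
  funext x
  unfold pd1
  rw [fderiv_fun_add (hf.differentiable (by simp) x) (hg.differentiable (by simp) x)]
  simp

lemma contDiff_coord {d : ℕ} (i : Fin d) :
    ContDiff ℝ (⊤ : ℕ∞) (fun y : EuclideanSpace ℝ (Fin d) => y i) :=
  (EuclideanSpace.proj (𝕜 := ℝ) i).contDiff

lemma contDiff_coord_mul {d : ℕ} (i : Fin d) {g : EuclideanSpace ℝ (Fin d) → ℝ}
    (hg : ContDiff ℝ (⊤ : ℕ∞) g) : ContDiff ℝ (⊤ : ℕ∞) (fun y => y i * g y) :=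
  (contDiff_coord i).mul hg

lemma pd1_const_mul {d : ℕ} (j : Fin d) (c : ℝ) {f : EuclideanSpace ℝ (Fin d) → ℝ}
    (hf : ContDiff ℝ (⊤ : ℕ∞) f) :
    pd1 j (fun y => c * f y) = fun x => c * pd1 j f x := by
  funext x
  unfold pd1
  rw [fderiv_const_mul (hf.differentiable (by simp) x) c]
  simp

lemma pd1_iter_add {d : ℕ} (j : Fin d) (n : ℕ) {f g : EuclideanSpace ℝ (Fin d) → ℝ}
    (hf : ContDiff ℝ (⊤ : ℕ∞) f) (hg : ContDiff ℝ (⊤ : ℕ∞) g) :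
    (pd1 j)^[n] (fun y => f y + g y) = fun x => (pd1 j)^[n] f x + (pd1 j)^[n] g x := by
  induction n generalizing f g with
  | zero => rfl
  | succ n ih =>
    rw [Function.iterate_succ_apply, Function.iterate_succ_apply, Function.iterate_succ_apply,
      pd1_add j hf hg]
    exact ih (contDiff_pd1 j hf) (contDiff_pd1 j hg)

lemma pd1_iter_const_mul {d : ℕ} (j : Fin d) (n : ℕ) (c : ℝ)
    {f : EuclideanSpace ℝ (Fin d) → ℝ} (hf : ContDiff ℝ (⊤ : ℕ∞) f) :
    (pd1 j)^[n] (fun y => c * f y) = fun x => c * (pd1 j)^[n] f x := by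
  induction n generalizing f with
  | zero => rfl
  | succ n ih =>
    rw [Function.iterate_succ_apply, Function.iterate_succ_apply, pd1_const_mul j c hf]
    exact ih (contDiff_pd1 j hf)

/-- For `j ≠ i`, `∂_j^m (x_i f) = x_i ∂_j^m f`. -/
lemma pd1_iter_coord_mul_ne {d : ℕ} {i j : Fin d} (hij : i ≠ j) (m : ℕ)
    {f : EuclideanSpace ℝ (Fin d) → ℝ} (hf : ContDiff ℝ (⊤ : ℕ∞) f) :
    (pd1 j)^[m] (fun y => y i * f y) = fun x => x i * (pd1 j)^[m] f x := by
  induction m generalizing f with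
  | zero => rfl
  | succ m ih =>
    rw [Function.iterate_succ_apply, pd1_coord_mul i j hf]
    simp only [if_neg hij, zero_mul, zero_add]
    exact ih (contDiff_pd1 j hf)

/-- `∂_i^{n+1} (x_i f) = x_i ∂_i^{n+1} f + (n+1) ∂_i^n f`. -/
lemma pd1_iter_coord_mul_self {d : ℕ} (i : Fin d) (n : ℕ)
    {f : EuclideanSpace ℝ (Fin d) → ℝ} (hf : ContDiff ℝ (⊤ : ℕ∞) f) :
    (pd1 i)^[n+1] (fun y => y i * f y)
      = fun x => x i * (pd1 i)^[n+1] f x + (n+1 : ℝ) * (pd1 i)^[n] f x := by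
  induction n generalizing f with
  | zero =>
    rw [Function.iterate_one, pd1_coord_mul i i hf]
    funext x
    simp [add_comm]
  | succ n ih =>
    rw [Function.iterate_succ_apply, pd1_coord_mul i i hf]
    have hpf : ContDiff ℝ (⊤ : ℕ∞) (pd1 i f) := contDiff_pd1 i hf
    have h1 : (fun x : EuclideanSpace ℝ (Fin d) =>
        (if i = i then (1:ℝ) else 0) * f x + x i * pd1 i f x)
        = fun x => f x + x i * pd1 i f x := by
      funext x; simp
    rw [h1, pd1_iter_add i (n+1) hf (contDiff_coord_mul i hpf), ih hpf]
    funext x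
    rw [← Function.iterate_succ_apply (pd1 i) (n+1) f,
      ← Function.iterate_succ_apply (pd1 i) n f]
    push_cast
    ring

/-- Foldr of partial derivatives along a list. -/
noncomputable def pdl {d : ℕ} (α : Fin d → ℕ) (l : List (Fin d))
    (f : EuclideanSpace ℝ (Fin d) → ℝ) : EuclideanSpace ℝ (Fin d) → ℝ :=
  l.foldr (fun i g => (pd1 i)^[α i] g) f

lemma pd_eq_pdl {d : ℕ} (α : Fin d → ℕ) (f : EuclideanSpace ℝ (Fin d) → ℝ) :
    pd α f = pdl α (List.finRange d) f := rfl

@[simp] lemma pdl_nil {d : ℕ} (α : Fin d → ℕ) (f : EuclideanSpace ℝ (Fin d) → ℝ) :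
    pdl α [] f = f := rfl

@[simp] lemma pdl_cons {d : ℕ} (α : Fin d → ℕ) (j : Fin d) (l : List (Fin d))
    (f : EuclideanSpace ℝ (Fin d) → ℝ) :
    pdl α (j :: l) f = (pd1 j)^[α j] (pdl α l f) := rfl

lemma contDiff_pdl {d : ℕ} (α : Fin d → ℕ) (l : List (Fin d))
    {f : EuclideanSpace ℝ (Fin d) → ℝ} (hf : ContDiff ℝ (⊤ : ℕ∞) f) :
    ContDiff ℝ (⊤ : ℕ∞) (pdl α l f) := by
  induction l with
  | nil => exact hf
  | cons j l ih => exact contDiff_pd1_iter j (α j) ih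

lemma pdl_congr {d : ℕ} {α α' : Fin d → ℕ} (l : List (Fin d))
    (h : ∀ j ∈ l, α j = α' j) (f : EuclideanSpace ℝ (Fin d) → ℝ) :
    pdl α l f = pdl α' l f := by
  induction l with
  | nil => rfl
  | cons j l ih =>
    rw [pdl_cons, pdl_cons, ih (fun j hj => h j (List.mem_cons_of_mem _ hj)),
      h j List.mem_cons_self]

lemma pdl_coord_mul {d : ℕ} (α : Fin d → ℕ) (i : Fin d) (l : List (Fin d))
    (hl : l.Nodup) {f : EuclideanSpace ℝ (Fin d) → ℝ} (hf : ContDiff ℝ (⊤ : ℕ∞) f) :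
    pdl α l (fun y => y i * f y)
      = fun x => x i * pdl α l f x
        + (if i ∈ l then (α i : ℝ) else 0)
          * pdl (Function.update α i (α i - 1)) l f x := by
  induction l generalizing f with
  | nil => simp
  | cons j l ih =>
    have hl' : l.Nodup := hl.of_cons
    have hF : ContDiff ℝ (⊤ : ℕ∞) (pdl α l f) := contDiff_pdl α l hf
    by_cases hji : j = i
    · subst hji
      have hjl : j ∉ l := (List.nodup_cons.mp hl).1
      rw [pdl_cons, ih hl' hf]
      simp only [if_neg hjl, zero_mul, add_zero]
      have hcongr : ∀ m, pdl (Function.update α j m) l f = pdl α l f := fun m =>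
        pdl_congr l (fun k hk => by
          rw [Function.update_of_ne (by rintro rfl; exact hjl hk)]) f
      rcases hn : α j with _ | n
      · simp only [Function.iterate_zero, id_eq, pdl_cons, hn]
        funext x
        simp
      · rw [pd1_iter_coord_mul_self j n hF]
        funext x
        simp only [pdl_cons, List.mem_cons, true_or, if_pos, Function.update_self, hn,
          Nat.add_sub_cancel, hcongr]
        push_cast
        ring
    · have hij : i ≠ j := fun h => hji h.symm
      rw [pdl_cons, ih hl' hf]
      have hF' : ContDiff ℝ (⊤ : ℕ∞) (pdl (Function.update α i (α i - 1)) l f) :=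
        contDiff_pdl _ l hf
      have hc : ContDiff ℝ (⊤ : ℕ∞) (fun x => x i * pdl α l f x) := contDiff_coord_mul i hF
      have hc' : ContDiff ℝ (⊤ : ℕ∞)
          (fun x => (if i ∈ l then (α i : ℝ) else 0) * pdl (Function.update α i (α i - 1)) l f x) :=
        contDiff_const.mul hF'
      rw [pd1_iter_add j (α j) hc hc', pd1_iter_coord_mul_ne hij (α j) hF,
        pd1_iter_const_mul j (α j) _ hF']
      funext x
      simp only [pdl_cons, List.mem_cons, hij, false_or, Function.update_of_ne hij.symm]

/-- Commuting a coordinate past `pd`. -/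
lemma pd_coord_mul {d : ℕ} (α : Fin d → ℕ) (i : Fin d)
    {f : EuclideanSpace ℝ (Fin d) → ℝ} (hf : ContDiff ℝ (⊤ : ℕ∞) f) :
    pd α (fun y => y i * f y)
      = fun x => x i * pd α f x + (α i : ℝ) * pd (Function.update α i (α i - 1)) f x := by
  rw [pd_eq_pdl, pd_eq_pdl, pd_eq_pdl,
    pdl_coord_mul α i (List.finRange d) (List.nodup_finRange d) hf]
  simp [List.mem_finRange]

/-- Scalar identity, middle case. -/
lemma scalarA (a b k : ℕ) (h1k : 1 ≤ k) (hkb : k + 1 ≤ b) (hka : k ≤ a) :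
    ((-1:ℝ))^k * (((b-1).factorial : ℝ)/(((b-1-k).factorial : ℝ))) * (a.choose k : ℝ)
      - ((-1:ℝ))^(k-1) * (((b-1).factorial : ℝ)/(((b-k).factorial : ℝ))) * (a.choose (k-1) : ℝ)
          * ((a - (k-1) : ℕ) : ℝ)
      = (-1:ℝ)^k * ((b.factorial : ℝ)/(((b-k).factorial : ℝ))) * (a.choose k : ℝ) := by
  obtain ⟨k', rfl⟩ : ∃ k', k = k' + 1 := ⟨k - 1, (Nat.succ_pred_eq_of_pos h1k).symm⟩
  obtain ⟨m, rfl⟩ : ∃ m, b = k' + 1 + m + 1 := ⟨b - (k'+1) - 1, by omega⟩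
  have hch : (a.choose k' : ℝ) * ((a - k' : ℕ) : ℝ) = (a.choose (k'+1) : ℝ) * (k'+1 : ℕ) := by
    rw [← Nat.cast_mul, ← Nat.cast_mul, ← Nat.choose_succ_right_eq]
  have e1 : k' + 1 + m + 1 - 1 = k' + 1 + m := by omega
  have e2 : k' + 1 + m + 1 - 1 - (k' + 1) = m := by omega
  have e3 : k' + 1 + m + 1 - (k' + 1) = m + 1 := by omega
  have e4 : k' + 1 - 1 = k' := by omega
  rw [e1]
  have e2' : k' + 1 + m - (k' + 1) = m := by omega
  rw [e2', e3, e4]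
  have hc0 : (a.choose k' : ℝ) ≠ 0 :=
    Nat.cast_ne_zero.mpr (Nat.choose_pos (by omega)).ne'
  have hm : ((m.factorial : ℝ)) ≠ 0 := Nat.cast_ne_zero.mpr (Nat.factorial_pos m).ne'
  have hm1 : (((m+1).factorial : ℝ)) ≠ 0 := Nat.cast_ne_zero.mpr (Nat.factorial_pos _).ne'
  have hsub : ((a - k' : ℕ) : ℝ) = ((k'+1:ℕ):ℝ) * (a.choose (k'+1) : ℝ) / (a.choose k' : ℝ) := by
    field_simp
    push_cast at hch ⊢
    linear_combination hch
  rw [hsub, Nat.factorial_succ m, Nat.factorial_succ (k'+1+m)]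
  push_cast
  field_simp
  ring

/-- Scalar identity, top case `k = b`. -/
lemma scalarB (a b : ℕ) (h1b : 1 ≤ b) (hba : b ≤ a) :
    - (((-1:ℝ))^(b-1) * (((b-1).factorial : ℝ)/(((b-b).factorial : ℝ))) * (a.choose (b-1) : ℝ)
          * ((a - (b-1) : ℕ) : ℝ))
      = (-1:ℝ)^b * ((b.factorial : ℝ)/(((b-b).factorial : ℝ))) * (a.choose b : ℝ) := by
  obtain ⟨b', rfl⟩ : ∃ b', b = b' + 1 := ⟨b - 1, (Nat.succ_pred_eq_of_pos h1b).symm⟩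
  have hch : (a.choose b' : ℝ) * ((a - b' : ℕ) : ℝ) = (a.choose (b'+1) : ℝ) * (b'+1 : ℕ) := by
    rw [← Nat.cast_mul, ← Nat.cast_mul, ← Nat.choose_succ_right_eq]
  simp only [Nat.add_sub_cancel, Nat.sub_self, Nat.factorial_zero, Nat.factorial_succ]
  push_cast
  push_cast at hch
  linear_combination (-((-1:ℝ)^b' * (b'.factorial:ℝ))) * hch

lemma contDiff_mpow {d : ℕ} (β : Fin d → ℕ) :
    ContDiff ℝ (⊤ : ℕ∞) (fun y : EuclideanSpace ℝ (Fin d) => mpow y β) := by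
  unfold mpow
  exact contDiff_prod (fun j _ => (contDiff_coord j).pow (β j))

lemma mpow_succ {d : ℕ} (x : EuclideanSpace ℝ (Fin d)) (β : Fin d → ℕ) (i : Fin d)
    (h : β i ≠ 0) :
    mpow x β = x i * mpow x (Function.update β i (β i - 1)) := by
  unfold mpow
  rw [← Finset.mul_prod_erase Finset.univ _ (Finset.mem_univ i),
    ← Finset.mul_prod_erase Finset.univ _ (Finset.mem_univ i), ← mul_assoc,
    Function.update_self]
  congr 1
  · rw [← pow_succ']
    congr 1
    omega
  · exact Finset.prod_congr rfl fun j hj =>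
      by rw [Function.update_of_ne (Finset.ne_of_mem_erase hj)]

lemma msize_split {d : ℕ} (δ : Fin d → ℕ) (i : Fin d) :
    msize δ = δ i + ∑ j ∈ Finset.univ.erase i, δ j :=
  (Finset.add_sum_erase Finset.univ δ (Finset.mem_univ i)).symm

lemma mfact_split {d : ℕ} (β : Fin d → ℕ) (i : Fin d) :
    (mfact β : ℝ) = ((β i).factorial : ℝ) * ∏ j ∈ Finset.univ.erase i, ((β j).factorial : ℝ) := by
  unfold mfact
  push_cast
  rw [← Finset.mul_prod_erase Finset.univ _ (Finset.mem_univ i)]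

lemma mchoose_split {d : ℕ} (α δ : Fin d → ℕ) (i : Fin d) :
    (mchoose α δ : ℝ) = (((α i).choose (δ i)) : ℝ)
      * ∏ j ∈ Finset.univ.erase i, (((α j).choose (δ j)) : ℝ) := by
  unfold mchoose
  push_cast
  rw [← Finset.mul_prod_erase Finset.univ _ (Finset.mem_univ i)]

lemma coeff_step {d : ℕ} (α β δ : Fin d → ℕ) (i : Fin d) (hb : 1 ≤ β i)
    (hδβ : ∀ j, δ j ≤ β j) (hδα : ∀ j, δ j ≤ α j) :
    (if δ i + 1 ≤ β i then
        (-1:ℝ)^(msize δ) * ((mfact (Function.update β i (β i - 1)) : ℝ)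
            / (mfact (Function.update β i (β i - 1) - δ) : ℝ)) * (mchoose α δ : ℝ)
      else 0)
    - (if 1 ≤ δ i then
        (-1:ℝ)^(msize (δ - (Pi.single i 1 : Fin d → ℕ)))
          * ((mfact (Function.update β i (β i - 1)) : ℝ)
            / (mfact (Function.update β i (β i - 1) - (δ - (Pi.single i 1 : Fin d → ℕ))) : ℝ))
          * (mchoose α (δ - Pi.single i 1) : ℝ)
          * (((α - (δ - (Pi.single i 1 : Fin d → ℕ))) i : ℕ) : ℝ)
      else 0)
    = (-1:ℝ)^(msize δ) * ((mfact β : ℝ) / (mfact (β - δ) : ℝ)) * (mchoose α δ : ℝ) := by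
  classical
  set β' := Function.update β i (β i - 1) with hβ'
  set e := (Pi.single i 1 : Fin d → ℕ) with he
  set P : ℝ := ∏ j ∈ Finset.univ.erase i, ((β j).factorial : ℝ) with hP
  set Q : ℝ := ∏ j ∈ Finset.univ.erase i, (((β j - δ j)).factorial : ℝ) with hQ
  set R : ℝ := ∏ j ∈ Finset.univ.erase i, (((α j).choose (δ j)) : ℝ) with hR
  set M : ℕ := ∑ j ∈ Finset.univ.erase i, δ j with hM
  have hne : ∀ j ∈ Finset.univ.erase i, j ≠ i := fun j hj => Finset.ne_of_mem_erase hj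
  have hde : ∀ j, j ≠ i → (δ - e) j = δ j := fun j hj => by
    simp [he, Pi.sub_apply, Pi.single_apply, hj]
  have hdei : (δ - e) i = δ i - 1 := by simp [he, Pi.sub_apply, Pi.single_apply]
  have h1 : (mfact β' : ℝ) = ((β i - 1).factorial : ℝ) * P := by
    rw [mfact_split β' i, hβ', Function.update_self]
    congr 1
    exact Finset.prod_congr rfl fun j hj => by rw [Function.update_of_ne (hne j hj)]
  have h2 : (mfact (β' - δ) : ℝ) = ((β i - 1 - δ i).factorial : ℝ) * Q := by
    rw [mfact_split (β' - δ) i]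
    congr 1
    · rw [Pi.sub_apply, hβ', Function.update_self]
    · exact Finset.prod_congr rfl fun j hj => by
        rw [Pi.sub_apply, hβ', Function.update_of_ne (hne j hj)]
  have h3 : (mfact β : ℝ) = ((β i).factorial : ℝ) * P := mfact_split β i
  have h4 : (mfact (β - δ) : ℝ) = ((β i - δ i).factorial : ℝ) * Q := by
    rw [mfact_split (β - δ) i]
    rfl
  have h5 : (mchoose α δ : ℝ) = (((α i).choose (δ i)) : ℝ) * R := mchoose_split α δ i
  have h6 : (mchoose α (δ - e) : ℝ) = (((α i).choose (δ i - 1)) : ℝ) * R := by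
    rw [mchoose_split α (δ - e) i, hdei]
    congr 1
    exact Finset.prod_congr rfl fun j hj => by rw [hde j (hne j hj)]
  have h7 : msize δ = δ i + M := msize_split δ i
  have h8 : msize (δ - e) = (δ i - 1) + M := by
    rw [msize_split (δ - e) i, hdei]
    congr 1
    exact Finset.sum_congr rfl fun j hj => hde j (hne j hj)
  have h10 : ((α - (δ - e)) i) = α i - (δ i - 1) := by
    rw [Pi.sub_apply, hdei]
  have hPne : P ≠ 0 := Finset.prod_ne_zero_iff.mpr fun j _ =>
    Nat.cast_ne_zero.mpr (Nat.factorial_pos _).ne'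
  have hQne : Q ≠ 0 := Finset.prod_ne_zero_iff.mpr fun j _ =>
    Nat.cast_ne_zero.mpr (Nat.factorial_pos _).ne'
  by_cases h2c : 1 ≤ δ i
  · have h9 : (mfact (β' - (δ - e)) : ℝ) = ((β i - δ i).factorial : ℝ) * Q := by
      rw [mfact_split (β' - (δ - e)) i]
      congr 1
      · rw [Pi.sub_apply, hβ', Function.update_self, hdei]
        congr 2
        omega
      · exact Finset.prod_congr rfl fun j hj => by
          rw [Pi.sub_apply, hβ', Function.update_of_ne (hne j hj), hde j (hne j hj)]
    by_cases h1c : δ i + 1 ≤ β i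
    · rw [if_pos h1c, if_pos h2c, h1, h2, h5, h6, h7, h8, h9, h10, h3, h4,
        pow_add, pow_add]
      have hs := scalarA (α i) (β i) (δ i) h2c h1c (hδα i)
      rw [mul_div_mul_comm, mul_div_mul_comm, mul_div_mul_comm]
      linear_combination ((-1:ℝ)^M * (P / Q) * R) * hs
    · have hδb : δ i = β i := le_antisymm (hδβ i) (by omega)
      rw [if_neg h1c, if_pos h2c, h8, h6, h1, h9, h10, h7, h3, h4, h5, pow_add, pow_add]
      have hs := scalarB (α i) (β i) hb (hδb ▸ hδα i)
      rw [hδb]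
      rw [mul_div_mul_comm, mul_div_mul_comm]
      linear_combination ((-1:ℝ)^M * (P / Q) * R) * hs
  · have hδ0 : δ i = 0 := by omega
    rw [if_pos (by omega), if_neg h2c, h1, h2, h5, h7, h3, h4, hδ0, pow_add]
    simp only [Nat.sub_zero]
    have hF1 : (((β i - 1).factorial : ℝ)) ≠ 0 :=
      Nat.cast_ne_zero.mpr (Nat.factorial_pos _).ne'
    have hF3 : (((β i).factorial : ℝ)) ≠ 0 :=
      Nat.cast_ne_zero.mpr (Nat.factorial_pos _).ne'
    rw [mul_div_mul_comm, mul_div_mul_comm, div_self hF1, div_self hF3]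
    ring

/-- The inverse Leibniz formula. -/
theorem inverse_leibniz {d : ℕ} (u : EuclideanSpace ℝ (Fin d) → ℝ)
    (hu : ContDiff ℝ (⊤ : ℕ∞) u) (α β : Fin d → ℕ) (x : EuclideanSpace ℝ (Fin d)) :
    mpow x β * pd α u x
      = ∑ γ ∈ Finset.Iic (β ⊓ α),
          (-1 : ℝ) ^ (msize γ) * ((mfact β : ℝ) / (mfact (β - γ) : ℝ))
            * (mchoose α γ : ℝ)
            * pd (α - γ) (fun y => mpow y (β - γ) * u y) x := by
  classical
  obtain ⟨n, hn⟩ : ∃ n, msize β = n := ⟨_, rfl⟩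
  induction n generalizing β with
  | zero =>
    have hβ0 : β = 0 := by
      funext j
      exact Finset.sum_eq_zero_iff.mp hn j (Finset.mem_univ j)
    subst hβ0
    have h0 : (0 : Fin d → ℕ) ⊓ α = 0 := inf_eq_left.mpr (fun j => Nat.zero_le (α j))
    have hIic : Finset.Iic ((0 : Fin d → ℕ) ⊓ α) = {0} := by
      rw [h0]
      ext γ
      simp [Finset.mem_Iic, le_zero_iff]
    rw [hIic, Finset.sum_singleton]
    have hfun : (fun y : EuclideanSpace ℝ (Fin d) => mpow y ((0:Fin d → ℕ) - 0) * u y) = u := by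
      funext y
      simp [mpow]
    rw [hfun]
    simp [msize, mfact, mchoose, mpow]
  | succ n IH =>
    have hex : ∃ i, β i ≠ 0 := by
      by_contra h
      push_neg at h
      rw [show msize β = 0 from Finset.sum_eq_zero fun j _ => h j] at hn
      omega
    obtain ⟨i, hi⟩ := hex
    have hb : 1 ≤ β i := Nat.one_le_iff_ne_zero.mpr hi
    set β' := Function.update β i (β i - 1) with hβ'def
    set e := (Pi.single i 1 : Fin d → ℕ) with hedef
    have hn' : msize β' = n := by
      unfold msize at hn ⊢
      rw [hβ'def, Finset.sum_update_of_mem (Finset.mem_univ i)]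
      rw [← Finset.add_sum_erase _ β (Finset.mem_univ i)] at hn
      rw [Finset.sdiff_singleton_eq_erase]
      omega
    have IHβ' := IH β' hn'
    have hmp : mpow x β = x i * mpow x β' := mpow_succ x β i hi
    set S := Finset.Iic (β' ⊓ α) with hSdef
    set S' := Finset.Iic (β ⊓ α) with hS'def
    set T : (Fin d → ℕ) → ℝ :=
      fun δ => pd (α - δ) (fun y => mpow y (β - δ) * u y) x with hTdef
    -- pointwise step
    have step_eq : ∀ γ ∈ S,
        x i * pd (α - γ) (fun y => mpow y (β' - γ) * u y) x
          = T γ - (((α - γ) i : ℕ) : ℝ) * T (γ + e) := by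
      intro γ hγ
      rw [hSdef, Finset.mem_Iic, le_inf_iff] at hγ
      obtain ⟨hγβ', hγα⟩ := hγ
      have hγi : γ i ≤ β i - 1 := by
        have := hγβ' i
        rwa [hβ'def, Function.update_self] at this
      have hvs : ContDiff ℝ (⊤ : ℕ∞) (fun y => mpow y (β' - γ) * u y) :=
        (contDiff_mpow _).mul hu
      have hne0 : (β - γ) i ≠ 0 := by
        rw [Pi.sub_apply]; omega
      have hupdB : Function.update (β - γ) i ((β - γ) i - 1) = β' - γ := by
        funext j
        rcases eq_or_ne j i with rfl | hj
        · rw [Function.update_self, Pi.sub_apply, Pi.sub_apply, hβ'def, Function.update_self]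
          omega
        · rw [Function.update_of_ne hj, Pi.sub_apply, Pi.sub_apply, hβ'def,
            Function.update_of_ne hj]
      have hupdA : Function.update (α - γ) i ((α - γ) i - 1) = α - (γ + e) := by
        funext j
        rcases eq_or_ne j i with rfl | hj
        · rw [Function.update_self, Pi.sub_apply, Pi.sub_apply, Pi.add_apply, hedef,
            Pi.single_eq_same]
          omega
        · rw [Function.update_of_ne hj, Pi.sub_apply, Pi.sub_apply, Pi.add_apply, hedef,
            Pi.single_eq_of_ne hj]
          omega
      have hBd2 : β' - γ = β - (γ + e) := by
        funext j
        rcases eq_or_ne j i with rfl | hj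
        · rw [Pi.sub_apply, Pi.sub_apply, Pi.add_apply, hβ'def, Function.update_self, hedef,
            Pi.single_eq_same]
          omega
        · rw [Pi.sub_apply, Pi.sub_apply, Pi.add_apply, hβ'def, Function.update_of_ne hj,
            hedef, Pi.single_eq_of_ne hj]
          omega
      have hfun : (fun y : EuclideanSpace ℝ (Fin d) => y i * (mpow y (β' - γ) * u y))
          = (fun y => mpow y (β - γ) * u y) := by
        funext y
        rw [mpow_succ y (β - γ) i hne0, hupdB]
        ring
      have hpc := congrFun (pd_coord_mul (α - γ) i hvs) x
      rw [hfun] at hpc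
      rw [hupdA] at hpc
      have hT1 : pd (α - γ) (fun y => mpow y (β - γ) * u y) x = T γ := rfl
      have hT2 : pd (α - (γ + e)) (fun y => mpow y (β' - γ) * u y) x = T (γ + e) := by
        rw [hTdef, hBd2]
      rw [hT1] at hpc
      rw [hT2] at hpc
      rw [Pi.sub_apply]
      rw [Pi.sub_apply] at hpc
      linarith [hpc]
    have hS'sub : S = S'.filter (fun δ => δ i + 1 ≤ β i) := by
      ext δ
      rw [hSdef, hS'def, Finset.mem_filter, Finset.mem_Iic, Finset.mem_Iic, le_inf_iff,
        le_inf_iff]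
      simp only [Pi.le_def]
      simp only [hβ'def, Function.update_apply]
      constructor
      · rintro ⟨h1, h2⟩
        have hbi := h1 i
        rw [if_pos rfl] at hbi
        refine ⟨⟨fun j => ?_, h2⟩, by omega⟩
        have := h1 j
        rcases eq_or_ne j i with rfl | hj
        · rw [if_pos rfl] at this; omega
        · rwa [if_neg hj] at this
      · rintro ⟨⟨h1, h2⟩, h3⟩
        refine ⟨fun j => ?_, h2⟩
        have := h1 j
        rcases eq_or_ne j i with rfl | hj
        · rw [if_pos rfl]; omega
        · rwa [if_neg hj]
    have main : mpow x β * pd α u x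
        = ∑ γ ∈ S, ((-1:ℝ)^(msize γ) * ((mfact β' : ℝ)/(mfact (β' - γ) : ℝ))
            * (mchoose α γ : ℝ) * T γ
          - (-1:ℝ)^(msize γ) * ((mfact β' : ℝ)/(mfact (β' - γ) : ℝ)) * (mchoose α γ : ℝ)
            * (((α - γ) i : ℕ) : ℝ) * T (γ + e)) := by
      rw [hmp, mul_assoc, IHβ', Finset.mul_sum]
      refine Finset.sum_congr rfl fun γ hγ => ?_
      rw [show x i * ((-1:ℝ)^(msize γ) * ((mfact β' : ℝ)/(mfact (β' - γ) : ℝ))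
            * (mchoose α γ : ℝ) * pd (α - γ) (fun y => mpow y (β' - γ) * u y) x)
          = (-1:ℝ)^(msize γ) * ((mfact β' : ℝ)/(mfact (β' - γ) : ℝ)) * (mchoose α γ : ℝ)
            * (x i * pd (α - γ) (fun y => mpow y (β' - γ) * u y) x) from by ring,
        step_eq γ hγ]
      ring
    rw [main, Finset.sum_sub_distrib]
    have hsum1 : ∑ γ ∈ S, (-1:ℝ)^(msize γ) * ((mfact β' : ℝ)/(mfact (β' - γ) : ℝ))
            * (mchoose α γ : ℝ) * T γ
        = ∑ δ ∈ S', (if δ i + 1 ≤ β i then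
            (-1:ℝ)^(msize δ) * ((mfact β' : ℝ)/(mfact (β' - δ) : ℝ)) * (mchoose α δ : ℝ)
          else 0) * T δ := by
      rw [hS'sub, Finset.sum_filter]
      exact Finset.sum_congr rfl fun δ _ => by split_ifs <;> simp
    have hfil : ∀ γ ∈ S, (-1:ℝ)^(msize γ) * ((mfact β' : ℝ)/(mfact (β' - γ) : ℝ))
            * (mchoose α γ : ℝ) * (((α - γ) i : ℕ) : ℝ) * T (γ + e) ≠ 0 → γ i < α i := by
      intro γ hγ hne
      by_contra hlt
      apply hne
      have hzero : (α - γ) i = 0 := by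
        rw [Pi.sub_apply]; omega
      rw [hzero]
      simp
    have hsum2 : ∑ γ ∈ S, (-1:ℝ)^(msize γ) * ((mfact β' : ℝ)/(mfact (β' - γ) : ℝ))
            * (mchoose α γ : ℝ) * (((α - γ) i : ℕ) : ℝ) * T (γ + e)
        = ∑ δ ∈ S', (if 1 ≤ δ i then
            (-1:ℝ)^(msize (δ - e)) * ((mfact β' : ℝ)/(mfact (β' - (δ - e)) : ℝ))
              * (mchoose α (δ - e) : ℝ) * (((α - (δ - e)) i : ℕ) : ℝ)
          else 0) * T δ := by
      rw [← Finset.sum_filter_of_ne hfil]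
      have hbij : ∑ γ ∈ S.filter (fun γ => γ i < α i),
            (-1:ℝ)^(msize γ) * ((mfact β' : ℝ)/(mfact (β' - γ) : ℝ))
              * (mchoose α γ : ℝ) * (((α - γ) i : ℕ) : ℝ) * T (γ + e)
          = ∑ δ ∈ S'.filter (fun δ => 1 ≤ δ i),
            (-1:ℝ)^(msize (δ - e)) * ((mfact β' : ℝ)/(mfact (β' - (δ - e)) : ℝ))
              * (mchoose α (δ - e) : ℝ) * (((α - (δ - e)) i : ℕ) : ℝ) * T δ := by
        refine Finset.sum_nbij' (fun γ => γ + e) (fun δ => δ - e) ?_ ?_ ?_ ?_ ?_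
        · intro γ hγ
          rw [Finset.mem_filter, hSdef, Finset.mem_Iic, le_inf_iff, Pi.le_def, Pi.le_def] at hγ
          obtain ⟨⟨h1, h2⟩, h3⟩ := hγ
          simp only [hβ'def, Function.update_apply] at h1
          rw [Finset.mem_filter, hS'def, Finset.mem_Iic, le_inf_iff, Pi.le_def, Pi.le_def]
          refine ⟨⟨fun j => ?_, fun j => ?_⟩, ?_⟩ <;>
            simp only [Pi.add_apply, hedef, Pi.single_apply]
          · have := h1 j
            rcases eq_or_ne j i with rfl | hj
            · rw [if_pos rfl] at this ⊢; omega
            · rw [if_neg hj] at this ⊢; omega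
          · have := h2 j
            rcases eq_or_ne j i with rfl | hj
            · rw [if_pos rfl]; omega
            · rw [if_neg hj]; omega
          · simp only [if_true]
            omega
        · intro δ hδ
          rw [Finset.mem_filter, hS'def, Finset.mem_Iic, le_inf_iff, Pi.le_def, Pi.le_def] at hδ
          obtain ⟨⟨h1, h2⟩, h3⟩ := hδ
          rw [Finset.mem_filter, hSdef, Finset.mem_Iic, le_inf_iff, Pi.le_def, Pi.le_def]
          simp only [hβ'def, Function.update_apply, Pi.sub_apply, hedef, Pi.single_apply]
          refine ⟨⟨fun j => ?_, fun j => ?_⟩, ?_⟩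
          · have := h1 j
            rcases eq_or_ne j i with rfl | hj
            · rw [if_pos rfl, if_pos rfl]; omega
            · rw [if_neg hj, if_neg hj]; omega
          · have := h2 j
            rcases eq_or_ne j i with rfl | hj
            · rw [if_pos rfl]; omega
            · rw [if_neg hj]; omega
          · simp only [if_true]
            have := h2 i
            omega
        · intro γ _
          funext j
          simp only [Pi.sub_apply, Pi.add_apply, hedef, Pi.single_apply]
          split_ifs <;> omega
        · intro δ hδ
          rw [Finset.mem_filter] at hδ
          funext j
          simp only [Pi.add_apply, Pi.sub_apply, hedef, Pi.single_apply]
          split_ifs with h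
          · subst h; omega
          · omega
        · intro γ hγ
          have hrec : γ + e - e = γ := by
            funext j
            simp only [Pi.sub_apply, Pi.add_apply, hedef, Pi.single_apply]
            split_ifs <;> omega
          rw [hrec]
      rw [hbij, Finset.sum_filter]
      refine Finset.sum_congr rfl fun δ _ => ?_
      split_ifs <;> simp
    rw [hsum1, hsum2, ← Finset.sum_sub_distrib]
    refine Finset.sum_congr rfl fun δ hδ => ?_
    rw [hS'def, Finset.mem_Iic, le_inf_iff, Pi.le_def, Pi.le_def] at hδ
    have hcs := coeff_step α β δ i hb (fun j => hδ.1 j) (fun j => hδ.2 j)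
    rw [← hβ'def, ← hedef] at hcs
    calc (if δ i + 1 ≤ β i then
            (-1:ℝ)^(msize δ) * ((mfact β' : ℝ)/(mfact (β' - δ) : ℝ)) * (mchoose α δ : ℝ)
          else 0) * T δ
        - (if 1 ≤ δ i then
            (-1:ℝ)^(msize (δ - e)) * ((mfact β' : ℝ)/(mfact (β' - (δ - e)) : ℝ))
              * (mchoose α (δ - e) : ℝ) * (((α - (δ - e)) i : ℕ) : ℝ)
          else 0) * T δ
        = ((if δ i + 1 ≤ β i then
            (-1:ℝ)^(msize δ) * ((mfact β' : ℝ)/(mfact (β' - δ) : ℝ)) * (mchoose α δ : ℝ)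
          else 0)
          - (if 1 ≤ δ i then
            (-1:ℝ)^(msize (δ - e)) * ((mfact β' : ℝ)/(mfact (β' - (δ - e)) : ℝ))
              * (mchoose α (δ - e) : ℝ) * (((α - (δ - e)) i : ℕ) : ℝ)
          else 0)) * T δ := by ring
      _ = ((-1:ℝ)^(msize δ) * ((mfact β : ℝ)/(mfact (β - δ) : ℝ)) * (mchoose α δ : ℝ)) * T δ := by
          rw [hcs]
      _ = (-1:ℝ)^(msize δ) * ((mfact β : ℝ)/(mfact (β - δ) : ℝ)) * (mchoose α δ : ℝ)
            * pd (α - δ) (fun y => mpow y (β - δ) * u y) x := rfl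
end

section
/- Let f ∈ C^∞(ℝ^d) satisfy |x^β ∂^α f(x)| ≤ C^{|α|+|β|+1} max(|α|,|β|)! for all x ∈ ℝ^d and all multi-indices α, β, for some constant C ≥ 1. Then there exist constants C' > 0 and c > 0 such that |x^β ∂^α f(x)| ≤ C'^{|α|+1} |α|! e^{−c|x|} for all x ∈ ℝ^d whenever |β| ≤ |α|. -/
open scoped BigOperators

lemma aux_choose_le_two_pow (n k : ℕ) : n.choose k ≤ 2 ^ n := by
  rcases le_or_gt k n with h | h
  · calc n.choose k ≤ ∑ i ∈ Finset.range (n + 1), n.choose i :=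
        Finset.single_le_sum (fun i _ => Nat.zero_le _)
          (Finset.mem_range.mpr (Nat.lt_succ_of_le h))
    _ = 2 ^ n := Nat.sum_range_choose n
  · rw [Nat.choose_eq_zero_of_lt h]
    exact Nat.zero_le _

lemma aux_add_factorial_le (a n : ℕ) :
    ((a + n).factorial : ℝ) ≤ 2 ^ (a + n) * a.factorial * n.factorial := by
  have h : (a + n).factorial = (a + n).choose n * a.factorial * n.factorial :=
    (Nat.add_choose_mul_factorial_mul_factorial a n).symm
  have h2 : (a + n).choose n ≤ 2 ^ (a + n) := aux_choose_le_two_pow _ _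
  have : (a + n).factorial ≤ 2 ^ (a + n) * a.factorial * n.factorial := by
    rw [h]
    exact Nat.mul_le_mul_right _ (Nat.mul_le_mul_right _ h2)
  calc ((a + n).factorial : ℝ) ≤ ((2 ^ (a + n) * a.factorial * n.factorial : ℕ) : ℝ) := by
        exact_mod_cast this
    _ = 2 ^ (a + n) * a.factorial * n.factorial := by push_cast; ring

theorem exp_decay_estimate {d : ℕ} (f : EuclideanSpace ℝ (Fin d) → ℝ)
    (hf : ContDiff ℝ (⊤ : ℕ∞) f) (C : ℝ) (hC : 1 ≤ C)
    (hbound : ∀ (x : EuclideanSpace ℝ (Fin d)) (α β : Fin d → ℕ),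
      |mpow x β * pd α f x|
        ≤ C ^ (msize α + msize β + 1) * (Nat.factorial (max (msize α) (msize β)) : ℝ)) :
    ∃ C' > 0, ∃ c > 0, ∀ (x : EuclideanSpace ℝ (Fin d)) (α β : Fin d → ℕ),
      msize β ≤ msize α →
      |mpow x β * pd α f x|
        ≤ C' ^ (msize α + 1) * (Nat.factorial (msize α) : ℝ) * Real.exp (-c * ‖x‖) := by
  have hC0 : (0 : ℝ) < C := lt_of_lt_of_le one_pos hC
  set C' : ℝ := 4 * ((d : ℝ) + 1) * C ^ 2 with hC'def
  set c : ℝ := (4 * ((d : ℝ) + 1) * C)⁻¹ with hcdef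
  have hC'pos : 0 < C' := by positivity
  have hcpos : 0 < c := by positivity
  refine ⟨C', hC'pos, c, hcpos, ?_⟩
  intro x α β hβα
  set a := msize α with hadef
  set bs := msize β with hbsdef
  set A := |mpow x β * pd α f x| with hAdef
  have hA0 : 0 ≤ A := abs_nonneg _
  by_cases hd : d = 0
  · -- degenerate case `d = 0`
    subst hd
    have hx : ‖x‖ = 0 := by
      rw [EuclideanSpace.norm_eq]
      simp
    have hbs0 : bs = 0 := by simp [hbsdef, msize]
    have h1 := hbound x α β
    rw [← hadef, ← hbsdef, ← hAdef, hbs0] at h1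
    have h2 : A ≤ C ^ (a + 1) * (a.factorial : ℝ) := by simpa using h1
    have h3 : C ^ (a + 1) ≤ C' ^ (a + 1) := by
      apply pow_le_pow_left₀ hC0.le
      nlinarith
    rw [hx]
    simp only [mul_zero, neg_zero, Real.exp_zero, mul_one]
    calc A ≤ C ^ (a + 1) * (a.factorial : ℝ) := h2
      _ ≤ C' ^ (a + 1) * (a.factorial : ℝ) := by
          apply mul_le_mul_of_nonneg_right h3 (by positivity)
  · -- main case `d ≥ 1`
    have hd1 : 1 ≤ d := Nat.one_le_iff_ne_zero.mpr hd
    have : Nonempty (Fin d) := Fin.pos_iff_nonempty.mp (Nat.pos_of_ne_zero hd)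
    set t : ℝ := ∑ i, |x i| with htdef
    have ht0 : 0 ≤ t := Finset.sum_nonneg fun i _ => abs_nonneg _
    -- `‖x‖ ≤ t`
    have hnorm : ‖x‖ ≤ t := by
      have h1 : ‖x‖ = Real.sqrt (∑ i, |x i| ^ 2) := by
        rw [EuclideanSpace.norm_eq]
        simp [Real.norm_eq_abs]
      rw [h1]
      calc Real.sqrt (∑ i, |x i| ^ 2) ≤ Real.sqrt (t ^ 2) := by
            apply Real.sqrt_le_sqrt
            exact Finset.sum_sq_le_sq_sum_of_nonneg fun i _ => abs_nonneg _
        _ = t := Real.sqrt_sq ht0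
    -- a coordinate of maximal absolute value
    obtain ⟨i0, _, hi0⟩ := Finset.exists_max_image Finset.univ (fun i => |x i|)
      Finset.univ_nonempty
    have htd : t ≤ (d : ℝ) * |x i0| := by
      calc t ≤ ∑ _i : Fin d, |x i0| :=
            Finset.sum_le_sum fun i _ => hi0 i (Finset.mem_univ i)
        _ = (d : ℝ) * |x i0| := by
            rw [Finset.sum_const, Finset.card_univ, Fintype.card_fin, nsmul_eq_mul]
    -- key pointwise bound from `hbound`
    have habs : ∀ n : ℕ, |x i0| ^ n * A ≤ C ^ (a + bs + n + 1) * ((a + n).factorial : ℝ) := by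
      intro n
      set γ : Fin d → ℕ := fun j => β j + if j = i0 then n else 0 with hγdef
      have hmsize : msize γ = bs + n := by
        rw [msize, hbsdef, msize]
        rw [Finset.sum_add_distrib]
        congr 1
        simp
      have hmpow : mpow x γ = mpow x β * (x i0) ^ n := by
        rw [mpow, mpow]
        have : ∀ j : Fin d, (x j) ^ (γ j) = (x j) ^ (β j) * (x j) ^ (if j = i0 then n else 0) := by
          intro j; rw [hγdef]; rw [pow_add]
        rw [Finset.prod_congr rfl fun j _ => this j, Finset.prod_mul_distrib]
        congr 1
        rw [Finset.prod_eq_single i0 (fun j _ hj => by simp [hj]) (by simp)]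
        simp
      have h1 := hbound x α γ
      rw [hmsize, hmpow, ← hadef] at h1
      have h2 : |mpow x β * (x i0) ^ n * pd α f x| = |x i0| ^ n * A := by
        rw [show mpow x β * (x i0) ^ n * pd α f x = (x i0) ^ n * (mpow x β * pd α f x) by ring,
          abs_mul, abs_pow, hAdef]
      rw [h2] at h1
      have hmax : (max a (bs + n)).factorial ≤ (a + n).factorial := by
        apply Nat.factorial_le
        omega
      calc |x i0| ^ n * A ≤ C ^ (a + (bs + n) + 1) * ((max a (bs + n)).factorial : ℝ) := h1
        _ ≤ C ^ (a + bs + n + 1) * ((a + n).factorial : ℝ) := by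
            rw [show a + (bs + n) + 1 = a + bs + n + 1 by ring]
            apply mul_le_mul_of_nonneg_left _ (by positivity)
            exact_mod_cast hmax
    -- the geometric ratio
    have hratio : c * (d : ℝ) * C * 2 ≤ 1 / 2 := by
      have hz : (0 : ℝ) < 4 * ((d : ℝ) + 1) * C := by positivity
      have hinv : (4 * ((d : ℝ) + 1) * C) * c = 1 := by
        rw [hcdef, mul_inv_cancel₀ hz.ne']
      nlinarith [mul_pos hcpos hC0, hcpos.le]
    have hcd0 : 0 ≤ c * (d : ℝ) * C * 2 := by positivity
    set u : ℝ := c * ‖x‖ with hudef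
    have hu0 : 0 ≤ u := by positivity
    have hut : u ≤ c * ((d : ℝ) * |x i0|) := by
      rw [hudef]
      apply mul_le_mul_of_nonneg_left (le_trans hnorm htd) hcpos.le
    set b : ℝ := C ^ (2 * a + 1) * 2 ^ a * (a.factorial : ℝ) with hbdef
    have hb0 : 0 ≤ b := by positivity
    -- termwise bound
    have hterm : ∀ n : ℕ, A * (u ^ n / (n.factorial : ℝ)) ≤ b * (1 / 2) ^ n := by
      intro n
      have hn0 : (0 : ℝ) < (n.factorial : ℝ) := by exact_mod_cast n.factorial_pos
      have step1 : A * u ^ n ≤ c ^ n * (d : ℝ) ^ n * (C ^ (a + bs + n + 1) * ((a + n).factorial : ℝ)) := by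
        calc A * u ^ n ≤ A * (c * ((d : ℝ) * |x i0|)) ^ n := by
              apply mul_le_mul_of_nonneg_left _ hA0
              exact pow_le_pow_left₀ hu0 hut n
          _ = c ^ n * (d : ℝ) ^ n * (|x i0| ^ n * A) := by
              rw [mul_pow, mul_pow]; ring
          _ ≤ c ^ n * (d : ℝ) ^ n * (C ^ (a + bs + n + 1) * ((a + n).factorial : ℝ)) := by
              apply mul_le_mul_of_nonneg_left (habs n) (by positivity)
      have step2 : ((a + n).factorial : ℝ) / (n.factorial : ℝ) ≤ 2 ^ (a + n) * (a.factorial : ℝ) := by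
        rw [div_le_iff₀ hn0]
        exact aux_add_factorial_le a n
      calc A * (u ^ n / (n.factorial : ℝ)) = (A * u ^ n) / (n.factorial : ℝ) := by ring
        _ ≤ (c ^ n * (d : ℝ) ^ n * (C ^ (a + bs + n + 1) * ((a + n).factorial : ℝ))) / (n.factorial : ℝ) := by
            gcongr
        _ = c ^ n * (d : ℝ) ^ n * C ^ (a + bs + n + 1) * (((a + n).factorial : ℝ) / (n.factorial : ℝ)) := by
            ring
        _ ≤ c ^ n * (d : ℝ) ^ n * C ^ (a + bs + n + 1) * (2 ^ (a + n) * (a.factorial : ℝ)) := by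
            apply mul_le_mul_of_nonneg_left step2 (by positivity)
        _ = (c * (d : ℝ) * C * 2) ^ n * (C ^ (a + bs + 1) * (2 ^ a * (a.factorial : ℝ))) := by
            rw [show a + bs + n + 1 = (a + bs + 1) + n by ring, pow_add C, pow_add (2 : ℝ),
              mul_pow, mul_pow, mul_pow]
            ring
        _ ≤ (1 / 2 : ℝ) ^ n * (C ^ (2 * a + 1) * (2 ^ a * (a.factorial : ℝ))) := by
            apply mul_le_mul (pow_le_pow_left₀ hcd0 hratio n) _ (by positivity) (by positivity)
            apply mul_le_mul_of_nonneg_right _ (by positivity)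
            exact pow_le_pow_right₀ hC (by omega)
        _ = b * (1 / 2) ^ n := by rw [hbdef]; ring
    -- summability
    have hgeom : Summable fun n : ℕ => b * (1 / 2 : ℝ) ^ n :=
      (summable_geometric_of_lt_one (by norm_num) (by norm_num)).mul_left b
    have hsum1 : Summable fun n : ℕ => A * (u ^ n / (n.factorial : ℝ)) :=
      Summable.of_nonneg_of_le (fun n => by positivity) hterm hgeom
    -- reduce to a bound on `A * exp u`
    have hexp : Real.exp u = ∑' n : ℕ, u ^ n / (n.factorial : ℝ) := by
      rw [Real.exp_eq_exp_ℝ, NormedSpace.exp_eq_tsum_div]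
    have hgoal : A * Real.exp u ≤ C' ^ (a + 1) * (a.factorial : ℝ) := by
      calc A * Real.exp u = ∑' n : ℕ, A * (u ^ n / (n.factorial : ℝ)) := by
            rw [hexp, ← tsum_mul_left]
        _ ≤ ∑' n : ℕ, b * (1 / 2 : ℝ) ^ n := Summable.tsum_le_tsum hterm hsum1 hgeom
        _ = b * (1 - 1 / 2)⁻¹ := by
            rw [tsum_mul_left, tsum_geometric_of_lt_one (by norm_num) (by norm_num)]
        _ = 2 * b := by rw [show ((1:ℝ) - 1 / 2)⁻¹ = 2 by norm_num]; ring
        _ ≤ C' ^ (a + 1) * (a.factorial : ℝ) := by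
            rw [hbdef]
            have key : 2 * C ^ (2 * a + 1) * 2 ^ a ≤ C' ^ (a + 1) := by
              have h1 : (2 * C ^ 2) ^ a ≤ C' ^ a := by
                apply pow_le_pow_left₀ (by positivity)
                rw [hC'def]; nlinarith
              have h2 : 2 * C ≤ C' := by rw [hC'def]; nlinarith
              calc 2 * C ^ (2 * a + 1) * 2 ^ a = (2 * C) * (2 * C ^ 2) ^ a := by
                    rw [mul_pow, ← pow_mul, pow_succ]
                    ring
                _ ≤ C' * C' ^ a := by
                    apply mul_le_mul h2 h1 (by positivity) hC'pos.le
                _ = C' ^ (a + 1) := by rw [pow_succ]; ring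
            calc 2 * (C ^ (2 * a + 1) * 2 ^ a * (a.factorial : ℝ))
                = (2 * C ^ (2 * a + 1) * 2 ^ a) * (a.factorial : ℝ) := by ring
              _ ≤ C' ^ (a + 1) * (a.factorial : ℝ) := by
                  apply mul_le_mul_of_nonneg_right key (by positivity)
    -- conclude
    have hexp' : Real.exp (-c * ‖x‖) = (Real.exp u)⁻¹ := by
      rw [hudef, neg_mul, Real.exp_neg]
    rw [hexp', ← div_eq_mul_inv, le_div_iff₀ (Real.exp_pos u)]
    exact hgoal
end

section
/- Let f ∈ C^∞(ℝ^d) satisfy |x^β ∂^α f(x)| ≤ C^{|α|+|β|+1} max(|α|,|β|)! for all α, β ∈ ℕ^d and some C > 0. Then there exist constants C' > 0, c > 0 such that |∂^α f(x)| ≤ C'^{|α|+1} α! (1+|x|²)^{−|α|/2} e^{−c|x|} for all x ∈ ℝ^d and all multi-indices α. -/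
open scoped BigOperators

/-! ### Auxiliary lemmas -/

lemma aux_exp_opt (A : ℝ) (hA : 0 < A) (t : ℝ) (ht : 0 ≤ t) :
    ∃ m : ℕ, 0 < t ^ m ∧ A ^ m * (Nat.factorial m : ℝ) ≤
      Real.exp 1 * Real.exp (-(t / (Real.exp 1 * A))) * t ^ m := by
  have he1 : (0:ℝ) < Real.exp 1 := Real.exp_pos 1
  set r := t / (Real.exp 1 * A) with hr
  have hr0 : 0 ≤ r := div_nonneg ht (by positivity)
  have hm1 : (⌊r⌋₊ : ℝ) ≤ r := Nat.floor_le hr0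
  have hm2 : r < ⌊r⌋₊ + 1 := Nat.lt_floor_add_one r
  refine ⟨⌊r⌋₊, ?_, ?_⟩
  · rcases Nat.eq_zero_or_pos ⌊r⌋₊ with h | h
    · simp [h]
    · have h1r : (1:ℝ) ≤ r := le_trans (by exact_mod_cast h) hm1
      have ht0 : 0 < t := by
        rcases lt_or_eq_of_le ht with h' | h'
        · exact h'
        · exfalso; rw [hr, ← h', zero_div] at h1r; linarith
      exact pow_pos ht0 _
  · have h1 : A * (⌊r⌋₊ : ℝ) ≤ t / Real.exp 1 := by
      have h2 : A * (⌊r⌋₊ : ℝ) ≤ A * r := mul_le_mul_of_nonneg_left hm1 hA.le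
      have h3 : A * r = t / Real.exp 1 := by
        rw [hr]; field_simp
      linarith
    calc A ^ ⌊r⌋₊ * (Nat.factorial ⌊r⌋₊ : ℝ)
        ≤ A ^ ⌊r⌋₊ * ((⌊r⌋₊ : ℝ)) ^ ⌊r⌋₊ := by
          gcongr
          · exact_mod_cast (Nat.factorial_le_pow ⌊r⌋₊)
      _ = (A * ⌊r⌋₊) ^ ⌊r⌋₊ := by rw [mul_pow]
      _ ≤ (t / Real.exp 1) ^ ⌊r⌋₊ := by
          apply pow_le_pow_left₀ (by positivity) h1
      _ = t ^ ⌊r⌋₊ * (Real.exp 1)⁻¹ ^ ⌊r⌋₊ := by rw [div_eq_mul_inv, mul_pow]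
      _ = t ^ ⌊r⌋₊ * Real.exp (-(⌊r⌋₊:ℝ)) := by
          rw [← Real.exp_neg, ← Real.exp_nat_mul]; ring_nf
      _ ≤ t ^ ⌊r⌋₊ * Real.exp (1 - r) := by
          have h4 : Real.exp (-(⌊r⌋₊:ℝ)) ≤ Real.exp (1 - r) := Real.exp_le_exp.mpr (by linarith)
          exact mul_le_mul_of_nonneg_left h4 (pow_nonneg ht _)
      _ = Real.exp 1 * Real.exp (-r) * t ^ ⌊r⌋₊ := by
          rw [sub_eq_add_neg, Real.exp_add]; ring

lemma aux_rpow_big (n : ℕ) (t : ℝ) (ht : 1 ≤ t) :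
    (1:ℝ) ≤ 2 ^ n * t ^ n * (1 + t ^ 2) ^ (-(n:ℝ) / 2) := by
  have ht0 : (0:ℝ) ≤ t := by linarith
  have h0 : (0:ℝ) < 1 + t ^ 2 := by positivity
  have key : (1 + t ^ 2) ^ ((n:ℝ) / 2) ≤ 2 ^ n * t ^ n := by
    calc (1 + t ^ 2) ^ ((n:ℝ) / 2) ≤ (2 * t ^ 2) ^ ((n:ℝ) / 2) := by
          apply Real.rpow_le_rpow h0.le (by nlinarith) (by positivity)
      _ = 2 ^ ((n:ℝ) / 2) * (t ^ 2) ^ ((n:ℝ) / 2) := Real.mul_rpow (by norm_num) (by positivity)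
      _ = 2 ^ ((n:ℝ) / 2) * t ^ (n:ℝ) := by
          rw [← Real.rpow_natCast t 2, ← Real.rpow_mul ht0]
          congr 1
          ring
      _ ≤ 2 ^ (n:ℝ) * t ^ (n:ℝ) := by
          have h2 : (2:ℝ) ^ ((n:ℝ)/2) ≤ (2:ℝ) ^ (n:ℝ) :=
            Real.rpow_le_rpow_of_exponent_le one_le_two (by
              have : (0:ℝ) ≤ (n:ℝ) := Nat.cast_nonneg n
              linarith)
          exact mul_le_mul_of_nonneg_right h2 (Real.rpow_nonneg ht0 _)
      _ = 2 ^ n * t ^ n := by rw [Real.rpow_natCast, Real.rpow_natCast]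
  rw [neg_div, Real.rpow_neg h0.le, ← div_eq_mul_inv, le_div_iff₀ (Real.rpow_pos_of_pos h0 _),
    one_mul]
  exact key

lemma aux_rpow_small (n : ℕ) (t : ℝ) (ht0 : 0 ≤ t) (ht : t ≤ 1) :
    (1:ℝ) ≤ 2 ^ n * (1 + t ^ 2) ^ (-(n:ℝ) / 2) := by
  have h0 : (0:ℝ) < 1 + t ^ 2 := by positivity
  have key : (1 + t ^ 2) ^ ((n:ℝ) / 2) ≤ 2 ^ n := by
    calc (1 + t ^ 2) ^ ((n:ℝ) / 2) ≤ (2:ℝ) ^ ((n:ℝ) / 2) := by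
          apply Real.rpow_le_rpow h0.le (by nlinarith) (by positivity)
      _ ≤ (2:ℝ) ^ (n:ℝ) := Real.rpow_le_rpow_of_exponent_le one_le_two (by
            have : (0:ℝ) ≤ (n:ℝ) := Nat.cast_nonneg n
            linarith)
      _ = 2 ^ n := Real.rpow_natCast 2 n
  rw [neg_div, Real.rpow_neg h0.le, ← div_eq_mul_inv, le_div_iff₀ (Real.rpow_pos_of_pos h0 _),
    one_mul]
  exact key

lemma aux_fact_add (n m : ℕ) :
    Nat.factorial (n + m) ≤ 2 ^ (n + m) * (Nat.factorial n * Nat.factorial m) := by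
  have h1 : (n + m).choose n * Nat.factorial n * Nat.factorial m = Nat.factorial (n + m) := by
    have := Nat.choose_mul_factorial_mul_factorial (Nat.le_add_right n m)
    simpa [Nat.add_sub_cancel_left] using this
  have h2 : (n + m).choose n ≤ 2 ^ (n + m) := by
    calc (n + m).choose n ≤ ∑ i ∈ Finset.range (n + m + 1), (n + m).choose i :=
          Finset.single_le_sum (fun _ _ => Nat.zero_le _) (Finset.mem_range.mpr (by omega))
      _ = 2 ^ (n + m) := Nat.sum_range_choose (n + m)
  calc Nat.factorial (n + m) = (n + m).choose n * Nat.factorial n * Nat.factorial m := h1.symm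
    _ ≤ 2 ^ (n + m) * Nat.factorial n * Nat.factorial m :=
        Nat.mul_le_mul_right _ (Nat.mul_le_mul_right _ h2)
    _ = 2 ^ (n + m) * (Nat.factorial n * Nat.factorial m) := by ring

lemma aux_fact_msize {d : ℕ} (α : Fin d → ℕ) :
    Nat.factorial (msize α) ≤ d ^ (msize α) * mfact α := by
  classical
  have hmem : α ∈ Finset.piAntidiag (Finset.univ : Finset (Fin d)) (msize α) := by
    rw [Finset.mem_piAntidiag]; exact ⟨rfl, fun i _ => Finset.mem_univ i⟩
  have hle : Nat.multinomial Finset.univ α ≤ d ^ (msize α) := by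
    have hsum := Finset.sum_pow_eq_sum_piAntidiag (Finset.univ : Finset (Fin d))
      (fun _ => (1:ℕ)) (msize α)
    simp only [one_pow, Finset.prod_const_one, mul_one, Finset.sum_const, Finset.card_univ,
      Fintype.card_fin, smul_eq_mul, Nat.mul_one, Nat.cast_id] at hsum
    calc Nat.multinomial Finset.univ α
        ≤ ∑ k ∈ Finset.piAntidiag Finset.univ (msize α), Nat.multinomial Finset.univ k :=
          Finset.single_le_sum (fun _ _ => Nat.zero_le _) hmem
      _ = d ^ (msize α) := by rw [← hsum]
  have hspec := Nat.multinomial_spec (Finset.univ : Finset (Fin d)) α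
  calc Nat.factorial (msize α) = mfact α * Nat.multinomial Finset.univ α := hspec.symm
    _ ≤ mfact α * d ^ (msize α) := by gcongr
    _ = d ^ (msize α) * mfact α := by ring

lemma aux_coord {d : ℕ} (hd : 1 ≤ d) (x : EuclideanSpace ℝ (Fin d)) :
    ∃ i, ‖x‖ ≤ d * |x i| := by
  have : Nonempty (Fin d) := Fin.pos_iff_nonempty.mp hd
  obtain ⟨i, -, hi⟩ := Finset.exists_max_image Finset.univ (fun j => |x j|) Finset.univ_nonempty
  refine ⟨i, ?_⟩
  rw [EuclideanSpace.norm_eq]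
  have hle : (∑ j, ‖x j‖ ^ 2) ≤ ((d:ℝ) * |x i|) ^ 2 := by
    calc (∑ j, ‖x j‖ ^ 2) ≤ ∑ _j : Fin d, |x i| ^ 2 := by
          apply Finset.sum_le_sum
          intro j _
          rw [Real.norm_eq_abs]
          exact pow_le_pow_left₀ (abs_nonneg _) (hi j (Finset.mem_univ j)) 2
      _ = (d:ℝ) * |x i| ^ 2 := by
          rw [Finset.sum_const, Finset.card_univ, Fintype.card_fin, nsmul_eq_mul]
      _ ≤ ((d:ℝ) * |x i|) ^ 2 := by
          have hd1 : (1:ℝ) ≤ (d:ℝ) := by exact_mod_cast hd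
          rw [mul_pow]
          have h2 : (d:ℝ) ≤ (d:ℝ) ^ 2 := by nlinarith
          exact mul_le_mul_of_nonneg_right h2 (by positivity)
  calc Real.sqrt (∑ j, ‖x j‖ ^ 2) ≤ Real.sqrt (((d:ℝ) * |x i|) ^ 2) := Real.sqrt_le_sqrt hle
    _ = (d:ℝ) * |x i| := Real.sqrt_sq (by positivity)

lemma aux_mpow_single {d : ℕ} (x : EuclideanSpace ℝ (Fin d)) (i : Fin d) (k : ℕ) :
    mpow x (Pi.single i k) = x i ^ k := by
  have h : (∏ j, x j ^ ((Pi.single i k : Fin d → ℕ) j)) = x i ^ ((Pi.single i k : Fin d → ℕ) i) :=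
    Finset.prod_eq_single i (fun j _ hj => by rw [Pi.single_eq_of_ne hj, pow_zero])
      (fun h => absurd (Finset.mem_univ i) h)
  rw [mpow, h, Pi.single_eq_same]

lemma aux_msize_single {d : ℕ} (i : Fin d) (k : ℕ) :
    msize (Pi.single i k) = k := by
  simp [msize]


theorem deriv_decay_estimate {d : ℕ} (f : EuclideanSpace ℝ (Fin d) → ℝ)
    (hf : ContDiff ℝ (⊤ : ℕ∞) f) (C : ℝ) (hC : 0 < C)
    (hbound : ∀ (x : EuclideanSpace ℝ (Fin d)) (α β : Fin d → ℕ),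
      |mpow x β * pd α f x|
        ≤ C ^ (msize α + msize β + 1) * (Nat.factorial (max (msize α) (msize β)) : ℝ)) :
    ∃ C' > 0, ∃ c > 0, ∀ (x : EuclideanSpace ℝ (Fin d)) (α : Fin d → ℕ),
      |pd α f x|
        ≤ C' ^ (msize α + 1) * (mfact α : ℝ)
            * (1 + ‖x‖ ^ 2) ^ (-(msize α : ℝ) / 2) * Real.exp (-c * ‖x‖) := by
  rcases Nat.eq_zero_or_pos d with hd | hd
  · -- degenerate case d = 0
    subst hd
    refine ⟨C, hC, 1, one_pos, ?_⟩
    intro x α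
    have hα : msize α = 0 := by simp [msize]
    have hfa : mfact α = 1 := by simp [mfact]
    have hx : ‖x‖ = 0 := by simp [EuclideanSpace.norm_eq]
    have hb := hbound x α α
    have hmp : mpow x α = 1 := by simp [mpow]
    rw [hmp, one_mul, hα] at hb
    simp only [Nat.add_zero, Nat.zero_add, max_self, Nat.factorial_zero, Nat.cast_one, mul_one,
      pow_one] at hb
    rw [hα, hfa, hx]
    norm_num
    exact hb
  · -- main case d ≥ 1
    have hd1 : (1:ℝ) ≤ (d:ℝ) := by exact_mod_cast hd
    set e := Real.exp 1 with he
    have he0 : 0 < e := Real.exp_pos 1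
    set C₁ := max C 1 with hC₁def
    have hC₁ : 1 ≤ C₁ := le_max_right _ _
    have hC₁0 : 0 < C₁ := lt_of_lt_of_le one_pos hC₁
    have hbound₁ : ∀ (x : EuclideanSpace ℝ (Fin d)) (α β : Fin d → ℕ),
        |mpow x β * pd α f x|
          ≤ C₁ ^ (msize α + msize β + 1) * (Nat.factorial (max (msize α) (msize β)) : ℝ) := by
      intro x α β
      refine (hbound x α β).trans ?_
      exact mul_le_mul_of_nonneg_right (pow_le_pow_left₀ hC.le (le_max_left C 1) _)
        (Nat.cast_nonneg _)
    obtain ⟨A, hAdef⟩ : ∃ A : ℝ, A = 2 * C₁ ^ 2 * d := ⟨_, rfl⟩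
    have hA0 : 0 < A := by rw [hAdef]; positivity
    set c := 1 / (e * A) with hc
    have hc0 : 0 < c := by positivity
    set C' := max (e * C₁) (2 * A * d) with hC'def
    have hC'0 : 0 < C' := lt_of_lt_of_le (by positivity : (0:ℝ) < e * C₁) (le_max_left _ _)
    refine ⟨C', hC'0, c, hc0, ?_⟩
    intro x α
    set n := msize α with hn
    set t := ‖x‖ with htdef
    have ht : 0 ≤ t := norm_nonneg x
    obtain ⟨i, hi⟩ := aux_coord hd x
    have key : ∀ k m : ℕ, k ≤ n + m → max n k ≤ n + m →
        t ^ k * |pd α f x| ≤ C₁ * A ^ n * (Nat.factorial n : ℝ)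
          * (A ^ m * (Nat.factorial m : ℝ)) := by
      intro k m hk hmax
      have h1 : |x i| ^ k * |pd α f x| ≤ C₁ ^ (n + k + 1) * (Nat.factorial (max n k) : ℝ) := by
        have hb := hbound₁ x α (Pi.single i k)
        rw [aux_mpow_single, aux_msize_single, abs_mul, abs_pow] at hb
        exact hb
      have h2 : t ^ k ≤ (d:ℝ) ^ k * |x i| ^ k := by
        calc t ^ k ≤ ((d:ℝ) * |x i|) ^ k := pow_le_pow_left₀ ht hi k
          _ = (d:ℝ) ^ k * |x i| ^ k := mul_pow _ _ _
      calc t ^ k * |pd α f x| ≤ ((d:ℝ) ^ k * |x i| ^ k) * |pd α f x| :=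
            mul_le_mul_of_nonneg_right h2 (abs_nonneg _)
        _ = (d:ℝ) ^ k * (|x i| ^ k * |pd α f x|) := by ring
        _ ≤ (d:ℝ) ^ k * (C₁ ^ (n + k + 1) * (Nat.factorial (max n k) : ℝ)) :=
            mul_le_mul_of_nonneg_left h1 (by positivity)
        _ ≤ (d:ℝ) ^ (n + m) * (C₁ ^ (2 * (n + m) + 1) * (Nat.factorial (n + m) : ℝ)) := by
            have e1 : (d:ℝ) ^ k ≤ (d:ℝ) ^ (n + m) := pow_le_pow_right₀ hd1 hk
            have e2 : C₁ ^ (n + k + 1) ≤ C₁ ^ (2 * (n + m) + 1) := pow_le_pow_right₀ hC₁ (by omega)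
            have e3 : (Nat.factorial (max n k) : ℝ) ≤ (Nat.factorial (n + m) : ℝ) := by
              exact_mod_cast Nat.factorial_le hmax
            exact mul_le_mul e1 (mul_le_mul e2 e3 (Nat.cast_nonneg _) (by positivity))
              (by positivity) (by positivity)
        _ ≤ (d:ℝ) ^ (n + m) * (C₁ ^ (2 * (n + m) + 1)
              * (2 ^ (n + m) * ((Nat.factorial n : ℝ) * (Nat.factorial m : ℝ)))) := by
            gcongr
            exact_mod_cast aux_fact_add n m
        _ = C₁ * A ^ n * (Nat.factorial n : ℝ) * (A ^ m * (Nat.factorial m : ℝ)) := by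
            rw [hAdef]; ring
    obtain ⟨m, htm, hm⟩ := aux_exp_opt A hA0 t ht
    have hE : Real.exp (-(t / (e * A))) = Real.exp (-c * t) := by
      rw [hc]; congr 1; field_simp
    rw [hE] at hm
    have hP0 : (0:ℝ) ≤ (1 + t ^ 2) ^ (-(n:ℝ) / 2) := Real.rpow_nonneg (by positivity) _
    have hE0 : (0:ℝ) < Real.exp (-c * t) := Real.exp_pos _
    have step : e * C₁ * ((2 * A) ^ n * (Nat.factorial n : ℝ))
        ≤ C' ^ (n + 1) * (mfact α : ℝ) := by
      have h1 : (Nat.factorial n : ℝ) ≤ (d:ℝ) ^ n * (mfact α : ℝ) := by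
        exact_mod_cast aux_fact_msize α
      have h2 : e * C₁ ≤ C' := le_max_left _ _
      have h3 : 2 * A * (d:ℝ) ≤ C' := le_max_right _ _
      calc e * C₁ * ((2 * A) ^ n * (Nat.factorial n : ℝ))
          ≤ e * C₁ * ((2 * A) ^ n * ((d:ℝ) ^ n * (mfact α : ℝ))) := by
            gcongr
        _ = (e * C₁) * ((2 * A * d) ^ n * (mfact α : ℝ)) := by ring
        _ ≤ C' * (C' ^ n * (mfact α : ℝ)) := by
            have h4 : (2 * A * (d:ℝ)) ^ n ≤ C' ^ n := pow_le_pow_left₀ (by positivity) h3 n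
            have h5 : (2 * A * (d:ℝ)) ^ n * (mfact α : ℝ) ≤ C' ^ n * (mfact α : ℝ) :=
              mul_le_mul_of_nonneg_right h4 (Nat.cast_nonneg _)
            exact mul_le_mul h2 h5 (by positivity) hC'0.le
        _ = C' ^ (n + 1) * (mfact α : ℝ) := by ring
    by_cases h1t : 1 ≤ t
    · have hk := key (n + m) m (le_refl _) (by omega)
      have htn : 0 < t ^ n := pow_pos (lt_of_lt_of_le one_pos h1t) n
      have haux := aux_rpow_big n t h1t
      have H : |pd α f x| * (t ^ n * t ^ m)
          ≤ (C' ^ (n + 1) * (mfact α : ℝ) * (1 + t ^ 2) ^ (-(n:ℝ) / 2) * Real.exp (-c * t))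
            * (t ^ n * t ^ m) := by
        calc |pd α f x| * (t ^ n * t ^ m) = t ^ (n + m) * |pd α f x| := by
              rw [pow_add]; ring
          _ ≤ C₁ * A ^ n * (Nat.factorial n : ℝ) * (A ^ m * (Nat.factorial m : ℝ)) := hk
          _ ≤ C₁ * A ^ n * (Nat.factorial n : ℝ)
                * (e * Real.exp (-c * t) * t ^ m) :=
              mul_le_mul_of_nonneg_left hm (by positivity)
          _ = (e * C₁ * (A ^ n * (Nat.factorial n : ℝ)) * Real.exp (-c * t) * t ^ m) * 1 := by
              ring
          _ ≤ (e * C₁ * (A ^ n * (Nat.factorial n : ℝ)) * Real.exp (-c * t) * t ^ m)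
                * (2 ^ n * t ^ n * (1 + t ^ 2) ^ (-(n:ℝ) / 2)) := by
              refine mul_le_mul_of_nonneg_left haux ?_
              positivity
          _ = (e * C₁ * ((2 * A) ^ n * (Nat.factorial n : ℝ)))
                * ((1 + t ^ 2) ^ (-(n:ℝ) / 2) * Real.exp (-c * t) * (t ^ n * t ^ m)) := by
              ring
          _ ≤ (C' ^ (n + 1) * (mfact α : ℝ))
                * ((1 + t ^ 2) ^ (-(n:ℝ) / 2) * Real.exp (-c * t) * (t ^ n * t ^ m)) := by
              refine mul_le_mul_of_nonneg_right step ?_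
              positivity
          _ = (C' ^ (n + 1) * (mfact α : ℝ) * (1 + t ^ 2) ^ (-(n:ℝ) / 2) * Real.exp (-c * t))
                * (t ^ n * t ^ m) := by ring
      exact le_of_mul_le_mul_right H (by positivity)
    · push_neg at h1t
      have hk := key m m (by omega) (Nat.max_le.mpr ⟨Nat.le_add_right n m, Nat.le_add_left m n⟩)
      have haux := aux_rpow_small n t ht h1t.le
      have H : |pd α f x| * t ^ m
          ≤ (C' ^ (n + 1) * (mfact α : ℝ) * (1 + t ^ 2) ^ (-(n:ℝ) / 2) * Real.exp (-c * t))
            * t ^ m := by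
        calc |pd α f x| * t ^ m = t ^ m * |pd α f x| := by ring
          _ ≤ C₁ * A ^ n * (Nat.factorial n : ℝ) * (A ^ m * (Nat.factorial m : ℝ)) := hk
          _ ≤ C₁ * A ^ n * (Nat.factorial n : ℝ)
                * (e * Real.exp (-c * t) * t ^ m) :=
              mul_le_mul_of_nonneg_left hm (by positivity)
          _ = (e * C₁ * (A ^ n * (Nat.factorial n : ℝ)) * Real.exp (-c * t) * t ^ m) * 1 := by
              ring
          _ ≤ (e * C₁ * (A ^ n * (Nat.factorial n : ℝ)) * Real.exp (-c * t) * t ^ m)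
                * (2 ^ n * (1 + t ^ 2) ^ (-(n:ℝ) / 2)) := by
              refine mul_le_mul_of_nonneg_left haux ?_
              positivity
          _ = (e * C₁ * ((2 * A) ^ n * (Nat.factorial n : ℝ)))
                * ((1 + t ^ 2) ^ (-(n:ℝ) / 2) * Real.exp (-c * t) * t ^ m) := by
              ring
          _ ≤ (C' ^ (n + 1) * (mfact α : ℝ))
                * ((1 + t ^ 2) ^ (-(n:ℝ) / 2) * Real.exp (-c * t) * t ^ m) := by
              refine mul_le_mul_of_nonneg_right step ?_
              positivity
          _ = (C' ^ (n + 1) * (mfact α : ℝ) * (1 + t ^ 2) ^ (-(n:ℝ) / 2) * Real.exp (-c * t))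
                * t ^ m := by ring
      exact le_of_mul_le_mul_right H htm
end

section
/- Let p: ℝ → ℝ (or ℂ) satisfy the analytic symbol estimates |p^{(α)}(ξ)| ≤ A^{α+1} α! ⟨ξ⟩^{m−α} for all ξ ∈ ℝ and α ∈ ℕ, for some constants A > 0 and m ∈ ℝ. Then p extends to a holomorphic function p(ξ+iη) on a sector { ξ+iη ∈ ℂ : |η| ≤ ε(1+|ξ|) } for some ε > 0, satisfying |p(ξ+iη)| ≤ C' ⟨ξ⟩^m there for some C' > 0. -/
open Metric Complex Filter

namespace AnalExtAux

/-- `g x = √(1+x²)` -/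
noncomputable def g (x : ℝ) : ℝ := Real.sqrt (1 + x ^ 2)

lemma g_pos (x : ℝ) : 0 < g x := Real.sqrt_pos.2 (by positivity)

lemma g_sq (x : ℝ) : g x ^ 2 = 1 + x ^ 2 := Real.sq_sqrt (by positivity)

lemma one_le_g (x : ℝ) : 1 ≤ g x := by nlinarith [g_sq x, g_pos x, sq_nonneg x]

lemma one_add_abs_le (x : ℝ) : 1 + |x| ≤ Real.sqrt 2 * g x := by
  have h2 : (0:ℝ) ≤ 2 := by norm_num
  have hs : Real.sqrt 2 ^ 2 = 2 := Real.sq_sqrt h2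
  have h : 1 + |x| = Real.sqrt ((1 + |x|) ^ 2) := (Real.sqrt_sq (by positivity)).symm
  rw [h, g, ← Real.sqrt_mul h2]
  apply Real.sqrt_le_sqrt
  nlinarith [sq_nonneg (|x| - 1), _root_.sq_abs x]

lemma g_lipschitz (x y : ℝ) : g x ≤ g y + |x - y| := by
  have h1 := g_sq x; have h2 := g_sq y
  have hgy : |y| ≤ g y := by nlinarith [abs_nonneg y, _root_.sq_abs y, g_pos y]
  have habs : |x| ≤ |y| + |x - y| := by
    have := abs_sub_abs_le_abs_sub x y; linarith
  nlinarith [g_pos x, g_pos y, abs_nonneg (x - y), abs_nonneg x, abs_nonneg y,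
    _root_.sq_abs x, _root_.sq_abs y, sq_nonneg (|y| + |x - y| - |x|)]

lemma rpow_split (x m : ℝ) (n : ℕ) :
    (1 + x ^ 2 : ℝ) ^ ((m - n) / 2) = (1 + x ^ 2) ^ (m / 2) / g x ^ n := by
  have h1 : (0:ℝ) < 1 + x ^ 2 := by positivity
  have : (m - n) / 2 = m / 2 - (1 / 2) * (n : ℝ) := by ring
  rw [this, Real.rpow_sub h1, Real.rpow_mul h1.le, ← Real.sqrt_eq_rpow,
    Real.rpow_natCast]
  rfl


variable {p : ℝ → ℂ} {m A : ℝ}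

/-- Local Taylor-series extension of `p` based at `x`. -/
noncomputable def Q (p : ℝ → ℂ) (x : ℝ) (z : ℂ) : ℂ :=
  ∑' n : ℕ, (n.factorial : ℂ)⁻¹ * iteratedDeriv n p x * (z - (x : ℂ)) ^ n

lemma norm_T_le (hA : 0 < A)
    (hbound : ∀ (ξ : ℝ) (α : ℕ), ‖iteratedDeriv α p ξ‖ ≤ A ^ (α + 1) * (Nat.factorial α : ℝ)
      * (1 + ξ ^ 2) ^ ((m - α) / 2))
    (x : ℝ) (n : ℕ) (z : ℂ) :
    ‖(n.factorial : ℂ)⁻¹ * iteratedDeriv n p x * (z - (x : ℂ)) ^ n‖ ≤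
      A * (1 + x ^ 2) ^ (m / 2) * (A * ‖z - (x : ℂ)‖ / g x) ^ n := by
  have hg := g_pos x
  have hfac : (0:ℝ) < n.factorial := by positivity
  have hb := hbound x n
  rw [rpow_split x m n] at hb
  have hnorm : ‖(n.factorial : ℂ)⁻¹ * iteratedDeriv n p x * (z - (x : ℂ)) ^ n‖
      = (n.factorial : ℝ)⁻¹ * ‖iteratedDeriv n p x‖ * ‖z - (x : ℂ)‖ ^ n := by
    simp [norm_mul, norm_pow]
  rw [hnorm, div_pow, mul_pow]
  calc (n.factorial : ℝ)⁻¹ * ‖iteratedDeriv n p x‖ * ‖z - (x : ℂ)‖ ^ n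
      ≤ (n.factorial : ℝ)⁻¹ * (A ^ (n + 1) * (n.factorial : ℝ)
          * ((1 + x ^ 2) ^ (m / 2) / g x ^ n)) * ‖z - (x : ℂ)‖ ^ n := by gcongr
    _ = A * (1 + x ^ 2) ^ (m / 2) * (A ^ n * ‖z - (x : ℂ)‖ ^ n / g x ^ n) := by
        field_simp
        ring

lemma norm_T_le' (hA : 0 < A)
    (hbound : ∀ (ξ : ℝ) (α : ℕ), ‖iteratedDeriv α p ξ‖ ≤ A ^ (α + 1) * (Nat.factorial α : ℝ)
      * (1 + ξ ^ 2) ^ ((m - α) / 2))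
    (x : ℝ) (n : ℕ) (z : ℂ) (hz : A * ‖z - (x : ℂ)‖ / g x ≤ 1 / 8) :
    ‖(n.factorial : ℂ)⁻¹ * iteratedDeriv n p x * (z - (x : ℂ)) ^ n‖ ≤
      A * (1 + x ^ 2) ^ (m / 2) * (1 / 8 : ℝ) ^ n := by
  refine (norm_T_le hA hbound x n z).trans ?_
  have h0 : (0:ℝ) ≤ A * ‖z - (x : ℂ)‖ / g x := by
    have := (g_pos x).le
    positivity
  have h1 : (0:ℝ) ≤ A * (1 + x ^ 2) ^ (m / 2) := by positivity
  exact mul_le_mul_of_nonneg_left (pow_le_pow_left₀ h0 hz n) h1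

lemma summable_geom_aux (c : ℝ) : Summable (fun n : ℕ => c * (1 / 8 : ℝ) ^ n) :=
  (summable_geometric_of_lt_one (by norm_num) (by norm_num)).mul_left c


noncomputable def rr (A x : ℝ) : ℝ := g x / (8 * A)

lemma rr_pos (hA : 0 < A) (x : ℝ) : 0 < rr A x := div_pos (g_pos x) (by positivity)

lemma norm_sub_re (z : ℂ) : ‖z - (z.re : ℂ)‖ = |z.im| := by
  have h : z - (z.re : ℂ) = (z.im : ℂ) * Complex.I := by
    apply Complex.ext <;> simp
  rw [h]
  simp

lemma real_mem_ball {x s r : ℝ} : (s : ℂ) ∈ ball (x : ℂ) r ↔ |s - x| < r := by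
  simp [mem_ball, Complex.dist_eq, ← Complex.ofReal_sub, Complex.norm_real]

lemma ratio_le (hA : 0 < A) {x : ℝ} {z : ℂ} (hz : ‖z - (x : ℂ)‖ < rr A x) :
    A * ‖z - (x : ℂ)‖ / g x ≤ 1 / 8 := by
  have hg := g_pos x
  have h1 : A * ‖z - (x : ℂ)‖ < A * (g x / (8 * A)) := mul_lt_mul_of_pos_left hz hA
  have h2 : A * (g x / (8 * A)) = g x / 8 := by field_simp
  rw [div_le_iff₀ hg]
  nlinarith

lemma Q_diff (hA : 0 < A)
    (hbound : ∀ (ξ : ℝ) (α : ℕ), ‖iteratedDeriv α p ξ‖ ≤ A ^ (α + 1) * (Nat.factorial α : ℝ)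
      * (1 + ξ ^ 2) ^ ((m - α) / 2)) (x : ℝ) :
    DifferentiableOn ℂ (Q p x) (ball (x : ℂ) (rr A x)) := by
  refine differentiableOn_tsum_of_summable_norm
    (summable_geom_aux (A * (1 + x ^ 2) ^ (m / 2))) (fun i => ?_) isOpen_ball
    (fun i w hw => ?_)
  · exact (((differentiableOn_id.sub (differentiableOn_const _)).pow i).const_mul _)
  · exact norm_T_le' hA hbound x i w (ratio_le hA (mem_ball_iff_norm.mp hw))

lemma Q_an (hA : 0 < A)
    (hbound : ∀ (ξ : ℝ) (α : ℕ), ‖iteratedDeriv α p ξ‖ ≤ A ^ (α + 1) * (Nat.factorial α : ℝ)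
      * (1 + ξ ^ 2) ^ ((m - α) / 2)) (x : ℝ) :
    AnalyticOnNhd ℂ (Q p x) (ball (x : ℂ) (rr A x)) :=
  (Q_diff hA hbound x).analyticOnNhd isOpen_ball

lemma Q_eq_near (hA : 0 < A) (hp : ContDiff ℝ (⊤ : ℕ∞) p)
    (hbound : ∀ (ξ : ℝ) (α : ℕ), ‖iteratedDeriv α p ξ‖ ≤ A ^ (α + 1) * (Nat.factorial α : ℝ)
      * (1 + ξ ^ 2) ^ ((m - α) / 2)) (x : ℝ) :
    ∀ᶠ t : ℝ in nhds x, Q p x (t : ℂ) = p t := by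
  obtain ⟨K, hK⟩ : ∃ K, ∀ s ∈ Set.Icc (x - 1) (x + 1), ‖(1 + s ^ 2 : ℝ) ^ (m / 2)‖ ≤ K :=
    isCompact_Icc.exists_bound_of_continuousOn
      (ContinuousOn.rpow_const (by fun_prop) (fun s _ => Or.inl (by positivity)))
  have hK0 : 0 ≤ K := (norm_nonneg _).trans (hK x ⟨by linarith, by linarith⟩)
  set r : ℝ := min 1 (1 / (8 * A)) with hr
  have hr0 : 0 < r := lt_min one_pos (by positivity)
  have hev : ∀ᶠ t : ℝ in nhds x, |t - x| < r := by
    filter_upwards [Metric.ball_mem_nhds x hr0] with t ht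
    rwa [Metric.mem_ball, Real.dist_eq] at ht
  filter_upwards [hev] with t ht
  by_cases hxt : t = x
  · subst hxt
    unfold Q
    rw [tsum_eq_single 0 (fun n hn => by simp [hn])]
    simp
  have hdiff : ∀ k : ℕ, ContDiff ℝ k p := fun k => hp.of_le (by exact_mod_cast le_top)
  have h1r : |t - x| < 1 := ht.trans_le (min_le_left _ _)
  have h3 : A * |t - x| ≤ 1 / 8 := by
    have h2 : |t - x| ≤ 1 / (8 * A) := ht.le.trans (min_le_right _ _)
    rw [le_div_iff₀ (by positivity)] at h2
    linarith
  have hsumm : Summable (fun n : ℕ =>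
      (n.factorial : ℂ)⁻¹ * iteratedDeriv n p x * ((t : ℂ) - (x : ℂ)) ^ n) := by
    refine Summable.of_norm_bounded (summable_geom_aux (A * (1 + x ^ 2) ^ (m / 2)))
      (fun n => norm_T_le' hA hbound x n t ?_)
    rw [← Complex.ofReal_sub, Complex.norm_real, Real.norm_eq_abs, div_le_iff₀ (g_pos x)]
    have h1 := one_le_g x
    linarith
  have hU : UniqueDiffOn ℝ (Set.uIcc x t) := uniqueDiffOn_uIcc (Ne.symm hxt)
  have hrem : ∀ n : ℕ, ‖p t - ∑ i ∈ Finset.range (n + 1),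
      (i.factorial : ℂ)⁻¹ * iteratedDeriv i p x * ((t : ℂ) - (x : ℂ)) ^ i‖
      ≤ A * K * (((n : ℝ) + 1) * (1 / 4 : ℝ) ^ (n + 1)) := by
    intro n
    have htay := taylor_integral_remainder (f := p) (x := t) (x₀ := x) (n := n)
      ((hdiff (n + 1)).contDiffOn)
    have hS : taylorWithinEval p n (Set.uIcc x t) x t = ∑ i ∈ Finset.range (n + 1),
        (i.factorial : ℂ)⁻¹ * iteratedDeriv i p x * ((t : ℂ) - (x : ℂ)) ^ i := by
      rw [taylor_within_apply]
      refine Finset.sum_congr rfl (fun k _ => ?_)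
      rw [iteratedDerivWithin_eq_iteratedDeriv hU (hdiff k).contDiffAt Set.left_mem_uIcc,
        Complex.real_smul]
      push_cast
      ring
    rw [← hS, htay]
    refine (intervalIntegral.norm_integral_le_of_norm_le_const
      (C := ((n : ℝ) + 1) * A ^ (n + 2) * K * |t - x| ^ n) ?_).trans ?_
    · intro s hs
      have hs' : s ∈ Set.uIcc x t := Set.uIoc_subset_uIcc hs
      rw [iteratedDerivWithin_eq_iteratedDeriv hU (hdiff (n + 1)).contDiffAt hs', norm_smul]
      have hsx : |s - x| ≤ |t - x| := Set.abs_sub_left_of_mem_uIcc hs'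
      have hsI : s ∈ Set.Icc (x - 1) (x + 1) := by
        rw [Set.mem_Icc]; constructor <;> cases abs_le.mp (hsx.trans h1r.le) <;> linarith
      have hts : ‖(t - s) ^ n / (n.factorial : ℝ)‖ ≤ |t - x| ^ n / n.factorial := by
        rw [Real.norm_eq_abs, abs_div, abs_pow, Nat.abs_cast]
        exact div_le_div_of_nonneg_right
          (pow_le_pow_left₀ (abs_nonneg _) (Set.abs_sub_right_of_mem_uIcc hs') n) (Nat.cast_nonneg _)
      have hD := hbound s (n + 1)
      rw [rpow_split s m (n + 1)] at hD
      have hgs : 1 ≤ g s ^ (n + 1) := one_le_pow₀ (one_le_g s)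
      have hk : (1 + s ^ 2 : ℝ) ^ (m / 2) ≤ K := (Real.le_norm_self _).trans (hK s hsI)
      have hpos : 0 ≤ (1 + s ^ 2 : ℝ) ^ (m / 2) := by positivity
      have hq : (1 + s ^ 2 : ℝ) ^ (m / 2) / g s ^ (n + 1) ≤ K := (div_le_self hpos hgs).trans hk
      calc ‖(t - s) ^ n / (n.factorial : ℝ)‖ * ‖iteratedDeriv (n + 1) p s‖
          ≤ (|t - x| ^ n / n.factorial) * (A ^ (n + 1 + 1) * ((n + 1).factorial : ℝ) * K) :=
            mul_le_mul hts (hD.trans (by gcongr)) (norm_nonneg _) (by positivity)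
        _ = ((n : ℝ) + 1) * A ^ (n + 2) * K * |t - x| ^ n := by
            rw [Nat.factorial_succ]; push_cast; field_simp
    · have h4 : (A * |t - x|) ^ (n + 1) ≤ (1 / 4 : ℝ) ^ (n + 1) :=
        pow_le_pow_left₀ (by positivity) (h3.trans (by norm_num)) _
      have hAK : 0 ≤ A * K := by positivity
      calc ((n : ℝ) + 1) * A ^ (n + 2) * K * |t - x| ^ n * |t - x|
          = A * K * (((n : ℝ) + 1) * (A * |t - x|) ^ (n + 1)) := by ring
        _ ≤ A * K * (((n : ℝ) + 1) * (1 / 4 : ℝ) ^ (n + 1)) := by gcongr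
  have hT : Filter.Tendsto (fun n => ∑ i ∈ Finset.range (n + 1),
      (i.factorial : ℂ)⁻¹ * iteratedDeriv i p x * ((t : ℂ) - (x : ℂ)) ^ i) atTop (nhds (p t)) := by
    rw [tendsto_iff_norm_sub_tendsto_zero]
    refine squeeze_zero (fun n => norm_nonneg _) (fun n => (norm_sub_rev _ _).trans_le (hrem n)) ?_
    have h := tendsto_self_mul_const_pow_of_abs_lt_one (r := (1 / 4 : ℝ)) (by norm_num [abs_of_pos])
    have h' := ((tendsto_add_atTop_iff_nat 1).mpr h).const_mul (A * K)
    simpa using h'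
  unfold Q
  exact tendsto_nhds_unique
    ((tendsto_add_atTop_iff_nat 1).mpr hsumm.hasSum.tendsto_sum_nat) hT


lemma Q_eq_real (hA : 0 < A) (hp : ContDiff ℝ (⊤ : ℕ∞) p)
    (hbound : ∀ (ξ : ℝ) (α : ℕ), ‖iteratedDeriv α p ξ‖ ≤ A ^ (α + 1) * (Nat.factorial α : ℝ)
      * (1 + ξ ^ 2) ^ ((m - α) / 2)) (x t : ℝ) (ht : |t - x| < rr A x) :
    Q p x (t : ℂ) = p t := by
  have hrr := rr_pos hA x
  set I := Set.Ioo (x - rr A x) (x + rr A x) with hI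
  have hIp : IsPreconnected I := isPreconnected_Ioo
  have hQa : AnalyticOnNhd ℝ (fun s : ℝ => Q p x (s : ℂ)) I := by
    intro s hs
    have hmem : (s : ℂ) ∈ ball (x : ℂ) (rr A x) := by
      rw [real_mem_ball]
      rcases hs with ⟨h1, h2⟩
      rw [abs_lt]; constructor <;> linarith
    exact ((Q_an hA hbound x (s : ℂ) hmem).restrictScalars).comp
      (Complex.ofRealCLM.analyticAt s)
  have hpa : AnalyticOnNhd ℝ p I := fun s _ =>
    (((Q_an hA hbound s (s : ℂ) (mem_ball_self (rr_pos hA s))).restrictScalars).comp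
      (Complex.ofRealCLM.analyticAt s)).congr (Q_eq_near hA hp hbound s)
  have hfreq : ∃ᶠ s : ℝ in nhdsWithin x ({x}ᶜ : Set ℝ), Q p x (s : ℂ) = p s :=
    ((Q_eq_near hA hp hbound x).filter_mono nhdsWithin_le_nhds).frequently
  have hx : x ∈ I := by
    rw [hI, Set.mem_Ioo]; constructor <;> linarith
  have ht' : t ∈ I := by
    rw [abs_lt] at ht
    rw [hI, Set.mem_Ioo]; constructor <;> linarith
  exact hQa.eqOn_of_preconnected_of_frequently_eq hpa hIp hx hfreq ht'

lemma Q_glue (hA : 0 < A) (hp : ContDiff ℝ (⊤ : ℕ∞) p)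
    (hbound : ∀ (ξ : ℝ) (α : ℕ), ‖iteratedDeriv α p ξ‖ ≤ A ^ (α + 1) * (Nat.factorial α : ℝ)
      * (1 + ξ ^ 2) ^ ((m - α) / 2)) (x y : ℝ) {z : ℂ}
    (hzx : z ∈ ball (x : ℂ) (rr A x)) (hzy : z ∈ ball (y : ℂ) (rr A y)) :
    Q p x z = Q p y z := by
  set U := ball (x : ℂ) (rr A x) ∩ ball (y : ℂ) (rr A y) with hU
  have hUo : IsOpen U := isOpen_ball.inter isOpen_ball
  have hUpre : IsPreconnected U :=
    ((convex_ball _ _).inter (convex_ball _ _)).isPreconnected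
  have hreal : ∀ w : ℂ, w ∈ U → (w.re : ℂ) ∈ U := by
    rintro w ⟨hw1, hw2⟩
    have key : ∀ c : ℝ, w ∈ ball (c : ℂ) (rr A c) → (w.re : ℂ) ∈ ball (c : ℂ) (rr A c) := by
      intro c hc
      rw [mem_ball_iff_norm] at hc ⊢
      refine lt_of_le_of_lt ?_ hc
      have h1 : ((w.re : ℂ) - (c : ℂ)) = ((w.re - c : ℝ) : ℂ) := by push_cast; ring
      rw [h1, Complex.norm_real]
      have h2 : w.re - c = (w - (c : ℂ)).re := by simp
      rw [Real.norm_eq_abs, h2]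
      exact Complex.abs_re_le_norm _
    exact ⟨key x hw1, key y hw2⟩
  have hc : ((z.re : ℝ) : ℂ) ∈ U := hreal z ⟨hzx, hzy⟩
  have hfreq : ∃ᶠ w in nhdsWithin ((z.re : ℝ) : ℂ) {((z.re : ℝ) : ℂ)}ᶜ, Q p x w = Q p y w := by
    rw [Filter.frequently_iff]
    intro V hV
    rcases mem_nhdsWithin.mp hV with ⟨O, hOo, hcO, hOV⟩
    rcases Metric.isOpen_iff.mp hOo _ hcO with ⟨η₁, hη₁, hb₁⟩
    rcases Metric.isOpen_iff.mp hUo _ hc with ⟨η₂, hη₂, hb₂⟩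
    set δ : ℝ := min η₁ η₂ / 2 with hδdef
    have hδ : 0 < δ := by positivity
    have hδ₁ : δ < η₁ := by
      have := min_le_left η₁ η₂; simp only [hδdef]; linarith
    have hδ₂ : δ < η₂ := by
      have := min_le_right η₁ η₂; simp only [hδdef]; linarith
    have hdist : dist (((z.re + δ : ℝ)) : ℂ) ((z.re : ℝ) : ℂ) = δ := by
      rw [Complex.dist_eq]
      have : ((z.re + δ : ℝ) : ℂ) - ((z.re : ℝ) : ℂ) = ((δ : ℝ) : ℂ) := by push_cast; ring
      rw [this, Complex.norm_real, Real.norm_eq_abs, abs_of_pos hδ]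
    have hmemU : (((z.re + δ : ℝ)) : ℂ) ∈ U := by
      apply hb₂
      rw [mem_ball, hdist]; exact hδ₂
    refine ⟨((z.re + δ : ℝ) : ℂ), hOV ⟨hb₁ ?_, ?_⟩, ?_⟩
    · rw [mem_ball, hdist]; exact hδ₁
    · simp only [Set.mem_compl_iff, Set.mem_singleton_iff]
      intro h
      have := Complex.ofReal_injective h
      linarith
    · rcases hmemU with ⟨hm1, hm2⟩
      rw [real_mem_ball] at hm1 hm2
      rw [Q_eq_real hA hp hbound x _ hm1, Q_eq_real hA hp hbound y _ hm2]
  have hQx : AnalyticOnNhd ℂ (Q p x) U := fun w hw => Q_an hA hbound x w hw.1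
  have hQy : AnalyticOnNhd ℂ (Q p y) U := fun w hw => Q_an hA hbound y w hw.2
  exact hQx.eqOn_of_preconnected_of_frequently_eq hQy hUpre hc hfreq ⟨hzx, hzy⟩

end AnalExtAux

open AnalExtAux Metric in
theorem analytic_symbol_extends_to_sector (p : ℝ → ℂ) (m A : ℝ) (hA : 0 < A)
    (hp : ContDiff ℝ (⊤ : ℕ∞) p)
    (hbound : ∀ (ξ : ℝ) (α : ℕ),
      ‖iteratedDeriv α p ξ‖ ≤ A ^ (α + 1) * (Nat.factorial α : ℝ)
        * (1 + ξ ^ 2) ^ ((m - α) / 2)) :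
    ∃ ε > 0, ∃ P : ℂ → ℂ,
      DifferentiableOn ℂ P {z : ℂ | |z.im| ≤ ε * (1 + |z.re|)} ∧
      (∀ ξ : ℝ, P ξ = p ξ) ∧
      ∃ C' > 0, ∀ z ∈ {z : ℂ | |z.im| ≤ ε * (1 + |z.re|)},
        ‖P z‖ ≤ C' * (1 + z.re ^ 2) ^ (m / 2) := by
  have hs2 : Real.sqrt 2 < 2 := by
    nlinarith [Real.sq_sqrt (by norm_num : (0:ℝ) ≤ 2), Real.sqrt_nonneg 2]
  have hsec : ∀ z : ℂ, |z.im| ≤ 1 / (16 * A) * (1 + |z.re|) → ‖z - (z.re : ℂ)‖ < rr A z.re := by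
    intro z hz
    rw [norm_sub_re]
    have e1 : |z.im| ≤ 1 / (16 * A) * (Real.sqrt 2 * g z.re) :=
      le_trans hz (mul_le_mul_of_nonneg_left (one_add_abs_le z.re) (by positivity))
    have e2 : 1 / (16 * A) * (Real.sqrt 2 * g z.re) < rr A z.re := by
      have h1 : 1 / (16 * A) * (Real.sqrt 2 * g z.re) = Real.sqrt 2 * g z.re / (16 * A) := by
        ring
      rw [h1, rr, div_lt_div_iff₀ (by positivity) (by positivity)]
      nlinarith [g_pos z.re, hA, mul_pos hA (g_pos z.re)]
    linarith
  refine ⟨1 / (16 * A), by positivity, fun z => Q p z.re z, ?_, ?_, 2 * A, by positivity, ?_⟩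
  · -- differentiability
    intro z₀ hz₀
    simp only [Set.mem_setOf_eq] at hz₀
    apply DifferentiableAt.differentiableWithinAt
    have h0 : ‖z₀ - (z₀.re : ℂ)‖ < rr A z₀.re := hsec z₀ hz₀
    set d : ℝ := rr A z₀.re - ‖z₀ - (z₀.re : ℂ)‖ with hd
    have hdpos : 0 < d := by rw [hd]; linarith
    set δ : ℝ := min (d / 2) (4 * A * d) with hδdef
    have hδ : 0 < δ := lt_min (by linarith) (by positivity)
    have key : ∀ w ∈ ball z₀ δ, Q p w.re w = Q p z₀.re w := by
      intro w hw
      rw [mem_ball_iff_norm] at hw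
      have hδ1 : δ ≤ d / 2 := min_le_left _ _
      have hδ2 : δ ≤ 4 * A * d := min_le_right _ _
      have hwx : w ∈ ball ((z₀.re : ℝ) : ℂ) (rr A z₀.re) := by
        rw [mem_ball_iff_norm]
        have h1 : ‖w - (z₀.re : ℂ)‖ ≤ ‖w - z₀‖ + ‖z₀ - (z₀.re : ℂ)‖ := by
          have : w - (z₀.re : ℂ) = (w - z₀) + (z₀ - (z₀.re : ℂ)) := by ring
          rw [this]; exact norm_add_le _ _
        linarith
      have hwre : w ∈ ball ((w.re : ℝ) : ℂ) (rr A w.re) := by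
        rw [mem_ball_iff_norm, norm_sub_re]
        have h1 : |w.im - z₀.im| ≤ ‖w - z₀‖ := by
          have h := Complex.abs_im_le_norm (w - z₀)
          simpa [Complex.sub_im] using h
        have h1' : |w.im| ≤ |z₀.im| + ‖w - z₀‖ := by
          have := abs_sub_abs_le_abs_sub w.im z₀.im
          linarith
        have h2 : |z₀.im| = ‖z₀ - (z₀.re : ℂ)‖ := (norm_sub_re z₀).symm
        have h3 : g z₀.re ≤ g w.re + |z₀.re - w.re| := g_lipschitz _ _
        have h4 : |z₀.re - w.re| ≤ ‖w - z₀‖ := by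
          have h := Complex.abs_re_le_norm (z₀ - w)
          have h' : (z₀ - w).re = z₀.re - w.re := by simp
          rw [h'] at h
          calc |z₀.re - w.re| ≤ ‖z₀ - w‖ := by simpa using h
            _ = ‖w - z₀‖ := norm_sub_rev _ _
        have h5 : rr A z₀.re - δ / (8 * A) ≤ rr A w.re := by
          rw [rr, rr, ← sub_div]
          gcongr
          linarith
        have h6 : δ / (8 * A) ≤ d / 2 := by
          rw [div_le_iff₀ (by positivity : (0:ℝ) < 8 * A)]
          nlinarith
        linarith
      exact Q_glue hA hp hbound w.re z₀.re hwre hwx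
    have hQd : DifferentiableAt ℂ (Q p z₀.re) z₀ :=
      (Q_diff hA hbound z₀.re).differentiableAt
        (isOpen_ball.mem_nhds (mem_ball_iff_norm.mpr h0))
    have hev : (fun z => Q p z.re z) =ᶠ[nhds z₀] Q p z₀.re :=
      Filter.eventuallyEq_of_mem (ball_mem_nhds z₀ hδ) key
    exact hev.differentiableAt_iff.mpr hQd
  · -- agreement with p
    intro ξ
    show Q p ((ξ : ℂ)).re (ξ : ℂ) = p ξ
    rw [Complex.ofReal_re]
    exact Q_eq_real hA hp hbound ξ ξ (by simpa using rr_pos hA ξ)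
  · -- bound
    intro z hz
    simp only [Set.mem_setOf_eq] at hz
    have h0 : ‖z - (z.re : ℂ)‖ < rr A z.re := hsec z hz
    have hrle := ratio_le hA h0
    have hsum : Summable (fun n : ℕ =>
        ‖(n.factorial : ℂ)⁻¹ * iteratedDeriv n p z.re * (z - (z.re : ℂ)) ^ n‖) :=
      Summable.of_nonneg_of_le (fun n => norm_nonneg _)
        (fun n => norm_T_le' hA hbound z.re n z hrle) (summable_geom_aux _)
    have h1 : ‖Q p z.re z‖ ≤ ∑' n : ℕ,
        ‖(n.factorial : ℂ)⁻¹ * iteratedDeriv n p z.re * (z - (z.re : ℂ)) ^ n‖ :=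
      norm_tsum_le_tsum_norm hsum
    have h2 : (∑' n : ℕ,
        ‖(n.factorial : ℂ)⁻¹ * iteratedDeriv n p z.re * (z - (z.re : ℂ)) ^ n‖)
        ≤ ∑' n : ℕ, A * (1 + z.re ^ 2) ^ (m / 2) * (1 / 8 : ℝ) ^ n :=
      Summable.tsum_le_tsum (fun n => norm_T_le' hA hbound z.re n z hrle) hsum (summable_geom_aux _)
    have h3 : (∑' n : ℕ, A * (1 + z.re ^ 2) ^ (m / 2) * (1 / 8 : ℝ) ^ n)
        = A * (1 + z.re ^ 2) ^ (m / 2) * (1 - 1 / 8 : ℝ)⁻¹ := by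
      rw [tsum_mul_left, tsum_geometric_of_lt_one (by norm_num) (by norm_num)]
    have h4 : (0:ℝ) < (1 + z.re ^ 2) ^ (m / 2) := Real.rpow_pos_of_pos (by positivity) _
    have h5 : A * (1 + z.re ^ 2) ^ (m / 2) * (1 - 1 / 8 : ℝ)⁻¹
        ≤ 2 * A * (1 + z.re ^ 2) ^ (m / 2) := by nlinarith
    linarith
end

section
/- Let p: ℝ → ℝ satisfy |p^{(α)}(ξ)| ≤ A^{α+1} α! ⟨ξ⟩^{m−α} for all α ∈ ℕ and p(ξ) + V − 1 ≥ c⟨ξ⟩^m for all ξ, with m ≥ 1, V > 1, c > 0. Then K(ξ) = 1/(p(ξ)+V−1) satisfies |K^{(α)}(ξ)| ≤ C_α ⟨ξ⟩^{−m−α} for every α ∈ ℕ; in particular |K(ξ)| ≤ C⟨ξ⟩^{−m} and all derivatives of K are bounded and square-integrable. -/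
open MeasureTheory

theorem resolvent_multiplier_estimates (p : ℝ → ℝ) (A m V c : ℝ)
    (hp : ContDiff ℝ (⊤ : ℕ∞) p) (hA : 0 < A) (hm : 1 ≤ m) (hV : 1 < V) (hc : 0 < c)
    (hsym : ∀ (ξ : ℝ) (α : ℕ),
      |iteratedDeriv α p ξ| ≤ A ^ (α + 1) * (Nat.factorial α : ℝ)
        * (1 + ξ ^ 2) ^ ((m - α) / 2))
    (hell : ∀ ξ : ℝ, c * (1 + ξ ^ 2) ^ (m / 2) ≤ p ξ + V - 1) :
    (∀ α : ℕ, ∃ Cα > 0, ∀ ξ : ℝ,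
        |iteratedDeriv α (fun ξ => 1 / (p ξ + V - 1)) ξ|
          ≤ Cα * (1 + ξ ^ 2) ^ ((-m - α) / 2)) ∧
    (∀ α : ℕ, ∃ B : ℝ, ∀ ξ : ℝ,
        |iteratedDeriv α (fun ξ => 1 / (p ξ + V - 1)) ξ| ≤ B) ∧
    (∀ α : ℕ, MemLp (iteratedDeriv α (fun ξ => 1 / (p ξ + V - 1))) 2 volume) := by
  have hpS : ContDiff ℝ (⊤ : ℕ∞) p := hp.of_le (mod_cast le_top)
  have hb : ∀ ξ : ℝ, (1 : ℝ) ≤ 1 + ξ ^ 2 := fun ξ => by nlinarith [sq_nonneg ξ]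
  have hbp : ∀ ξ : ℝ, (0 : ℝ) < 1 + ξ ^ 2 := fun ξ => by positivity
  have hrpos : ∀ (ξ : ℝ) (e : ℝ), (0 : ℝ) < (1 + ξ ^ 2) ^ e :=
    fun ξ e => Real.rpow_pos_of_pos (hbp ξ) e
  have hrp : ∀ (ξ : ℝ) (a b : ℝ),
      (1 + ξ ^ 2) ^ (a / 2) * (1 + ξ ^ 2) ^ (b / 2) = (1 + ξ ^ 2) ^ ((a + b) / 2) := by
    intro ξ a b
    rw [← Real.rpow_add (hbp ξ)]
    ring_nf
  set K : ℝ → ℝ := fun ξ => 1 / (p ξ + V - 1) with hKdef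
  have hgpos : ∀ ξ : ℝ, 0 < p ξ + V - 1 := fun ξ =>
    lt_of_lt_of_le (by positivity) (hell ξ)
  have hKinv : K = fun ξ => (p ξ + V - 1)⁻¹ := by
    funext ξ; simp [hKdef, one_div]
  have hKc : ContDiff ℝ (⊤ : ℕ∞) K := by
    rw [hKinv]
    exact (((hpS.add contDiff_const).sub contDiff_const).inv fun ξ => (hgpos ξ).ne')
  have hdpc : ContDiff ℝ (⊤ : ℕ∞) (fun x => -(deriv p x)) :=
    (contDiff_infty_iff_deriv.mp hpS).2.neg
  have hKKc : ContDiff ℝ (⊤ : ℕ∞) (fun ξ => K ξ * K ξ) := hKc.mul hKc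
  -- derivative formula
  have hdK : deriv K = fun ξ => -(deriv p ξ) * (K ξ * K ξ) := by
    funext ξ
    have hd : DifferentiableAt ℝ (fun ξ => p ξ + V - 1) ξ :=
      ((hpS.differentiable (by simp) ξ).add_const V).sub_const 1
    rw [hKinv]
    change deriv (fun ξ => p ξ + V - 1)⁻¹ ξ = _
    rw [deriv_inv'' hd (hgpos ξ).ne']
    have : deriv (fun ξ => p ξ + V - 1) ξ = deriv p ξ := by
      simp [deriv_sub_const, deriv_add_const]
    rw [this, div_eq_mul_inv, sq, mul_inv]
  -- base estimate
  have hK0 : ∀ ξ : ℝ, |K ξ| ≤ c⁻¹ * (1 + ξ ^ 2) ^ ((-m - (0 : ℕ)) / 2) := by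
    intro ξ
    have h1 : |K ξ| = (p ξ + V - 1)⁻¹ := by
      rw [hKinv, abs_of_pos (inv_pos.mpr (hgpos ξ))]
    rw [h1]
    have h2 : (p ξ + V - 1)⁻¹ ≤ (c * (1 + ξ ^ 2) ^ (m / 2))⁻¹ :=
      inv_anti₀ (by positivity) (hell ξ)
    calc (p ξ + V - 1)⁻¹ ≤ (c * (1 + ξ ^ 2) ^ (m / 2))⁻¹ := h2
      _ = c⁻¹ * (1 + ξ ^ 2) ^ ((-m - (0 : ℕ)) / 2) := by
          rw [mul_inv, ← Real.rpow_neg (hbp ξ).le,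
            show ((-m - ((0:ℕ):ℝ)) / 2 : ℝ) = -(m / 2) by push_cast; ring]
  -- main inductive estimate
  have key : ∀ N : ℕ, ∃ C : ℝ, 0 < C ∧ ∀ β ≤ N, ∀ ξ : ℝ,
      |iteratedDeriv β K ξ| ≤ C * (1 + ξ ^ 2) ^ ((-m - β) / 2) := by
    intro N
    induction N with
    | zero =>
      refine ⟨c⁻¹, inv_pos.mpr hc, ?_⟩
      intro β hβ ξ
      interval_cases β
      simpa using hK0 ξ
    | succ N ih =>
      obtain ⟨C, hCpos, hC⟩ := ih
      -- derivatives of K * K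
      have hKK : ∀ j ≤ N, ∀ ξ : ℝ,
          ‖iteratedFDeriv ℝ j (fun ξ => K ξ * K ξ) ξ‖
            ≤ (2 ^ N * C ^ 2) * (1 + ξ ^ 2) ^ ((-(2 * m) - j) / 2) := by
        intro j hj ξ
        have h1 := norm_iteratedFDeriv_mul_le hKc hKc ξ (n := j) (by exact_mod_cast le_top)
        refine h1.trans ?_
        have h2 : ∀ l ∈ Finset.range (j + 1),
            (j.choose l : ℝ) * ‖iteratedFDeriv ℝ l K ξ‖ * ‖iteratedFDeriv ℝ (j - l) K ξ‖
              ≤ (j.choose l : ℝ) * C ^ 2 * (1 + ξ ^ 2) ^ ((-(2 * m) - j) / 2) := by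
          intro l hl
          have hlj : l ≤ j := Nat.lt_succ_iff.mp (Finset.mem_range.mp hl)
          have e1 : ‖iteratedFDeriv ℝ l K ξ‖ ≤ C * (1 + ξ ^ 2) ^ ((-m - l) / 2) := by
            rw [norm_iteratedFDeriv_eq_norm_iteratedDeriv, Real.norm_eq_abs]
            exact hC l (hlj.trans hj) ξ
          have e2 : ‖iteratedFDeriv ℝ (j - l) K ξ‖
              ≤ C * (1 + ξ ^ 2) ^ ((-m - ((j : ℝ) - l)) / 2) := by
            rw [norm_iteratedFDeriv_eq_norm_iteratedDeriv, Real.norm_eq_abs]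
            have := hC (j - l) ((Nat.sub_le j l).trans hj) ξ
            rwa [Nat.cast_sub hlj] at this
          calc (j.choose l : ℝ) * ‖iteratedFDeriv ℝ l K ξ‖ * ‖iteratedFDeriv ℝ (j - l) K ξ‖
              ≤ (j.choose l : ℝ) * (C * (1 + ξ ^ 2) ^ ((-m - l) / 2))
                * (C * (1 + ξ ^ 2) ^ ((-m - ((j : ℝ) - l)) / 2)) := by
                apply mul_le_mul
                · exact mul_le_mul_of_nonneg_left e1 (by positivity)
                · exact e2
                · exact norm_nonneg _
                · positivity
            _ = (j.choose l : ℝ) * C ^ 2 * (1 + ξ ^ 2) ^ ((-(2 * m) - j) / 2) := by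
                rw [show ((-(2 * m) - j) / 2 : ℝ) = ((-m - l) + (-m - ((j:ℝ) - l))) / 2 by ring,
                  ← hrp ξ (-m - l) (-m - ((j:ℝ) - l))]
                ring
        refine (Finset.sum_le_sum h2).trans ?_
        rw [← Finset.sum_mul, ← Finset.sum_mul]
        have h3 : (∑ l ∈ Finset.range (j + 1), (j.choose l : ℝ)) = 2 ^ j := by
          rw [← Nat.cast_sum, Nat.sum_range_choose]
          norm_num
        rw [h3]
        apply mul_le_mul_of_nonneg_right _ (hrpos ξ _).le
        apply mul_le_mul_of_nonneg_right _ (by positivity)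
        exact pow_le_pow_right₀ one_le_two hj
      -- the new bound in order N+1
      set C' : ℝ := (∑ i ∈ Finset.range (N + 1),
          (N.choose i : ℝ) * (A ^ (i + 2) * (Nat.factorial (i + 1) : ℝ)) * (2 ^ N * C ^ 2))
        with hC'def
      have hC'nonneg : 0 ≤ C' := by
        apply Finset.sum_nonneg
        intro i _
        positivity
      have hnew : ∀ ξ : ℝ, |iteratedDeriv (N + 1) K ξ|
          ≤ C' * (1 + ξ ^ 2) ^ ((-m - (N + 1 : ℕ)) / 2) := by
        intro ξ
        have h0 : |iteratedDeriv (N + 1) K ξ|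
            = ‖iteratedFDeriv ℝ N (fun y => -(deriv p y) * (K y * K y)) ξ‖ := by
          rw [iteratedDeriv_succ', hdK, norm_iteratedFDeriv_eq_norm_iteratedDeriv,
            Real.norm_eq_abs]
        rw [h0]
        have h1 := norm_iteratedFDeriv_mul_le hdpc hKKc ξ (n := N) (by exact_mod_cast le_top)
        refine h1.trans ?_
        have h2 : ∀ i ∈ Finset.range (N + 1),
            (N.choose i : ℝ) * ‖iteratedFDeriv ℝ i (fun y => -(deriv p y)) ξ‖
              * ‖iteratedFDeriv ℝ (N - i) (fun y => K y * K y) ξ‖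
            ≤ (N.choose i : ℝ) * (A ^ (i + 2) * (Nat.factorial (i + 1) : ℝ)) * (2 ^ N * C ^ 2)
              * (1 + ξ ^ 2) ^ ((-m - (N + 1 : ℕ)) / 2) := by
          intro i hi
          have hiN : i ≤ N := Nat.lt_succ_iff.mp (Finset.mem_range.mp hi)
          have e1 : ‖iteratedFDeriv ℝ i (fun y => -(deriv p y)) ξ‖
              ≤ A ^ (i + 2) * (Nat.factorial (i + 1) : ℝ)
                * (1 + ξ ^ 2) ^ ((m - ((i : ℝ) + 1)) / 2) := by
            rw [norm_iteratedFDeriv_eq_norm_iteratedDeriv, Real.norm_eq_abs]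
            have hneg : iteratedDeriv i (fun y => -(deriv p y)) ξ
                = -(iteratedDeriv i (deriv p) ξ) := by
              have := iteratedDeriv_neg i (deriv p) ξ
              simpa using this
            rw [hneg, abs_neg, ← iteratedDeriv_succ']
            have := hsym ξ (i + 1)
            push_cast at this ⊢
            convert this using 3 <;> ring
          have e2 : ‖iteratedFDeriv ℝ (N - i) (fun y => K y * K y) ξ‖
              ≤ (2 ^ N * C ^ 2) * (1 + ξ ^ 2) ^ ((-(2 * m) - ((N : ℝ) - i)) / 2) := by
            have := hKK (N - i) (Nat.sub_le N i) ξ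
            rwa [Nat.cast_sub hiN] at this
          calc (N.choose i : ℝ) * ‖iteratedFDeriv ℝ i (fun y => -(deriv p y)) ξ‖
              * ‖iteratedFDeriv ℝ (N - i) (fun y => K y * K y) ξ‖
              ≤ (N.choose i : ℝ)
                * (A ^ (i + 2) * (Nat.factorial (i + 1) : ℝ)
                  * (1 + ξ ^ 2) ^ ((m - ((i : ℝ) + 1)) / 2))
                * ((2 ^ N * C ^ 2) * (1 + ξ ^ 2) ^ ((-(2 * m) - ((N : ℝ) - i)) / 2)) := by
                apply mul_le_mul
                · exact mul_le_mul_of_nonneg_left e1 (by positivity)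
                · exact e2
                · exact norm_nonneg _
                · positivity
            _ = (N.choose i : ℝ) * (A ^ (i + 2) * (Nat.factorial (i + 1) : ℝ))
                * (2 ^ N * C ^ 2) * (1 + ξ ^ 2) ^ ((-m - (N + 1 : ℕ)) / 2) := by
                rw [show ((-m - (N + 1 : ℕ)) / 2 : ℝ)
                    = ((m - ((i:ℝ) + 1)) + (-(2 * m) - ((N:ℝ) - i))) / 2 by push_cast; ring,
                  ← hrp ξ (m - ((i:ℝ) + 1)) (-(2 * m) - ((N:ℝ) - i))]
                ring
        refine (Finset.sum_le_sum h2).trans ?_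
        rw [← Finset.sum_mul, hC'def]
      refine ⟨C + C', by positivity, ?_⟩
      intro β hβ ξ
      rcases Nat.lt_succ_iff_lt_or_eq.mp (Nat.lt_succ_of_le hβ) with h | h
      · calc |iteratedDeriv β K ξ| ≤ C * (1 + ξ ^ 2) ^ ((-m - β) / 2) :=
            hC β (Nat.lt_succ_iff.mp h) ξ
          _ ≤ (C + C') * (1 + ξ ^ 2) ^ ((-m - β) / 2) := by
            apply mul_le_mul_of_nonneg_right (by linarith) (hrpos ξ _).le
      · subst h
        calc |iteratedDeriv (N + 1) K ξ| ≤ C' * (1 + ξ ^ 2) ^ ((-m - (N + 1 : ℕ)) / 2) :=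
            hnew ξ
          _ ≤ (C + C') * (1 + ξ ^ 2) ^ ((-m - (N + 1 : ℕ)) / 2) := by
            apply mul_le_mul_of_nonneg_right (by linarith) (hrpos ξ _).le
  refine ⟨?_, ?_, ?_⟩
  · intro α
    obtain ⟨C, hCpos, hC⟩ := key α
    exact ⟨C, hCpos, fun ξ => hC α le_rfl ξ⟩
  · intro α
    obtain ⟨C, hCpos, hC⟩ := key α
    refine ⟨C, fun ξ => (hC α le_rfl ξ).trans ?_⟩
    have : (1 + ξ ^ 2) ^ ((-m - α) / 2) ≤ 1 := by
      apply Real.rpow_le_one_of_one_le_of_nonpos (hb ξ)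
      have : (0:ℝ) ≤ α := Nat.cast_nonneg α
      nlinarith
    nlinarith
  · intro α
    obtain ⟨C, hCpos, hC⟩ := key α
    have hmeas : AEStronglyMeasurable (iteratedDeriv α K) volume :=
      (hKc.continuous_iteratedDeriv α (by exact_mod_cast le_top)).aestronglyMeasurable
    have hdomcont : Continuous (fun ξ : ℝ => (1 + ξ ^ 2) ^ (-(1:ℝ)/2)) := by
      apply Continuous.rpow_const
      · exact continuous_const.add (continuous_pow 2)
      · intro x; left; exact (hbp x).ne'
    have hdom : MemLp (fun ξ : ℝ => (1 + ξ ^ 2) ^ (-(1:ℝ)/2)) 2 volume := by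
      rw [memLp_two_iff_integrable_sq hdomcont.aestronglyMeasurable]
      have : (fun ξ : ℝ => ((1 + ξ ^ 2) ^ (-(1:ℝ)/2)) ^ 2)
          = fun ξ : ℝ => (1 + ξ ^ 2)⁻¹ := by
        funext ξ
        rw [← Real.rpow_natCast ((1 + ξ ^ 2) ^ (-(1:ℝ)/2)) 2, ← Real.rpow_mul (hbp ξ).le]
        norm_num [Real.rpow_neg_one]
      rw [this]
      exact integrable_inv_one_add_sq
    refine MemLp.of_le (hdom.const_mul C) hmeas (ae_of_all _ fun ξ => ?_)
    rw [Real.norm_eq_abs, Real.norm_eq_abs]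
    refine (hC α le_rfl ξ).trans ?_
    have h1 : (1 + ξ ^ 2) ^ ((-m - α) / 2) ≤ (1 + ξ ^ 2) ^ (-(1:ℝ)/2) := by
      apply Real.rpow_le_rpow_of_exponent_le (hb ξ)
      have : (0:ℝ) ≤ α := Nat.cast_nonneg α
      nlinarith
    calc C * (1 + ξ ^ 2) ^ ((-m - α) / 2) ≤ C * (1 + ξ ^ 2) ^ (-(1:ℝ)/2) :=
        mul_le_mul_of_nonneg_left h1 hCpos.le
      _ ≤ |C * (1 + ξ ^ 2) ^ (-(1:ℝ)/2)| := le_abs_self _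
end

section
/- Let −π < θ ≤ π with |θ| ≠ π/2 and θ ≠ π. The function u(z) = 3 Cosh^{−2}( (e^{−iθ}/2) z ), initially defined for real z, satisfies the ODE −u'' + e^{−2iθ} u = (e^{−2iθ}/2) u² on ℝ, and its meromorphic extension to ℂ has poles exactly at the points z = e^{i(θ+π/2)} (2k+1)π for k ∈ ℤ. -/
open Complex Filter

/-- The explicit solution `u(z) = 3 Cosh^{-2}((e^{-iθ}/2) z)`. -/
noncomputable def uTheta (θ : ℝ) (z : ℂ) : ℂ :=
  3 / (Complex.cosh (Complex.exp (-(θ : ℂ) * Complex.I) / 2 * z)) ^ 2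

/-- The set of poles `z = e^{i(θ+π/2)}(2k+1)π`, `k ∈ ℤ`. -/
noncomputable def poleSet (θ : ℝ) : Set ℂ :=
  Set.range (fun k : ℤ =>
    Complex.exp (((θ : ℂ) + (Real.pi : ℂ) / 2) * Complex.I) * (2 * (k : ℂ) + 1)
      * (Real.pi : ℂ))

/-! With `a = e^{-iθ}/2` we have `u = 3 sech² (a z)`. Differentiating twice and using
`cosh² - sinh² = 1` gives `-u'' + 4a² u = 2a² u²` wherever `cosh (a z) ≠ 0`. The zeros of
`cosh (a z)` are `a z = (2k+1)πi/2`, which is exactly `poleSet θ`; they are simple zeros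
(the derivative `a sinh (a z)` is `± a i` there), so `cosh (a z) → 0` through nonzero values and
`‖u‖ → ∞`. A pole `e^{iθ} i (2k+1)π` has imaginary part `(2k+1)π cos θ`, which is nonzero when
`|θ| ≠ π/2`, so no pole is real and the equation holds on all of `ℝ`. -/

open scoped Real Topology

theorem Complex.cosh_eq_zero_iff {w : ℂ} :
    cosh w = 0 ↔ ∃ k : ℤ, w = (2 * k + 1) * π / 2 * I := by
  rw [← cosh_neg, ← cos_mul_I, cos_eq_zero_iff]
  refine exists_congr fun k => ⟨fun h => ?_, fun h => ?_⟩
  · linear_combination I * h + w * I_sq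
  · linear_combination (-I) * h - (2 * k + 1) * π / 2 * I_sq

noncomputable def soliton (a z : ℂ) : ℂ := 3 / cosh (a * z) ^ 2

section soliton

variable {a z : ℂ}

theorem hasDerivAt_cosh_const_mul (a z : ℂ) :
    HasDerivAt (fun w => cosh (a * w)) (a * sinh (a * z)) z := by
  simpa [mul_comm] using ((hasDerivAt_id z).const_mul a).ccosh

theorem hasDerivAt_sinh_const_mul (a z : ℂ) :
    HasDerivAt (fun w => sinh (a * w)) (a * cosh (a * z)) z := by
  simpa [mul_comm] using ((hasDerivAt_id z).const_mul a).csinh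

theorem hasDerivAt_soliton (hz : cosh (a * z) ≠ 0) :
    HasDerivAt (soliton a) (-6 * a * sinh (a * z) / cosh (a * z) ^ 3) z := by
  refine ((hasDerivAt_const z (3 : ℂ)).fun_div ((hasDerivAt_cosh_const_mul a z).fun_pow 2)
    (pow_ne_zero 2 hz)).congr_deriv ?_
  field_simp
  ring

theorem deriv_soliton_eventuallyEq (hz : cosh (a * z) ≠ 0) :
    deriv (soliton a) =ᶠ[𝓝 z] fun w => -6 * a * sinh (a * w) / cosh (a * w) ^ 3 := by
  have hopen : IsOpen {w | cosh (a * w) ≠ 0} :=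
    isOpen_compl_singleton.preimage (by fun_prop)
  filter_upwards [hopen.mem_nhds hz] with w hw
  exact (hasDerivAt_soliton hw).deriv

theorem iteratedDeriv_two_soliton (hz : cosh (a * z) ≠ 0) :
    iteratedDeriv 2 (soliton a) z =
      12 * a ^ 2 / cosh (a * z) ^ 2 - 18 * a ^ 2 / cosh (a * z) ^ 4 := by
  have h := ((hasDerivAt_sinh_const_mul a z).const_mul (-6 * a)).fun_div
    ((hasDerivAt_cosh_const_mul a z).fun_pow 3) (pow_ne_zero 3 hz)
  rw [iteratedDeriv_succ, iteratedDeriv_one, (deriv_soliton_eventuallyEq hz).deriv_eq, h.deriv]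
  field_simp
  linear_combination (-18 * a ^ 2 * cosh (a * z) ^ 2) * cosh_sq_sub_sinh_sq (a * z)

theorem soliton_ode (hz : cosh (a * z) ≠ 0) :
    -iteratedDeriv 2 (soliton a) z + 4 * a ^ 2 * soliton a z = 2 * a ^ 2 * soliton a z ^ 2 := by
  rw [iteratedDeriv_two_soliton hz, soliton]
  field_simp
  ring

theorem tendsto_norm_soliton_atTop (ha : a ≠ 0) (hz : cosh (a * z) = 0) :
    Tendsto (fun w => ‖soliton a w‖) (𝓝[≠] z) atTop := by
  have hsinh : sinh (a * z) ≠ 0 := by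
    intro h
    simpa [h, hz] using cosh_sq_sub_sinh_sq (a * z)
  have hcosh : Tendsto (fun w => cosh (a * w)) (𝓝[≠] z) (𝓝[≠] 0) := by
    simpa [hz] using (hasDerivAt_cosh_const_mul a z).tendsto_nhdsNE (mul_ne_zero ha hsinh)
  have hinv := (tendsto_pow_atTop two_ne_zero).comp
    (tendsto_norm_inv_nhdsNE_zero_atTop.comp hcosh)
  refine (hinv.const_mul_atTop three_pos).congr fun w => ?_
  simp [soliton, div_eq_mul_inv]

end soliton

theorem Real.cos_ne_zero_of_abs_le_pi {θ : ℝ} (h : |θ| ≤ π) (hθ : |θ| ≠ π / 2) :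
    Real.cos θ ≠ 0 := by
  rw [← Real.cos_abs]
  intro h0
  exact hθ <| Real.injOn_cos ⟨abs_nonneg θ, h⟩ ⟨by positivity, by linarith [Real.pi_pos]⟩
    (h0.trans Real.cos_pi_div_two.symm)

theorem exp_add_pi_div_two_mul_I (z : ℂ) : exp ((z + π / 2) * I) = exp (z * I) * I := by
  rw [add_mul, exp_add, exp_pi_div_two_mul_I]

theorem exp_neg_mul_I_div_two_mul_pole (θ : ℝ) (k : ℤ) :
    exp (-θ * I) / 2 * (exp ((θ + π / 2) * I) * (2 * k + 1) * π) = (2 * k + 1) * π / 2 * I := by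
  have h : exp (-θ * I) * exp (θ * I) = 1 := by rw [← exp_add, neg_mul, neg_add_cancel, exp_zero]
  rw [exp_add_pi_div_two_mul_I]
  linear_combination (2 * k + 1) * π / 2 * I * h

theorem cosh_eq_zero_iff_mem_poleSet (θ : ℝ) (z : ℂ) :
    cosh (exp (-θ * I) / 2 * z) = 0 ↔ z ∈ poleSet θ := by
  have ha : exp (-θ * I) / 2 ≠ 0 := by simp
  rw [cosh_eq_zero_iff, poleSet, Set.mem_range]
  refine exists_congr fun k => ?_
  rw [← exp_neg_mul_I_div_two_mul_pole θ k, mul_right_inj' ha, eq_comm]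

theorem ofReal_notMem_poleSet {θ : ℝ} (hθ : Real.cos θ ≠ 0) (x : ℝ) : (x : ℂ) ∉ poleSet θ := by
  rintro ⟨k, hk⟩
  have hk' : (2 * k + 1 : ℝ) ≠ 0 := by exact_mod_cast (by omega : 2 * k + 1 ≠ 0)
  rw [exp_add_pi_div_two_mul_I] at hk
  have := congrArg im hk
  simp [exp_ofReal_mul_I_re, hθ, hk'] at this

theorem sharpness_example_general (θ : ℝ) (hθ₁ : -Real.pi < θ) (hθ₂ : θ ≤ Real.pi)
    (hθ₃ : |θ| ≠ Real.pi / 2) :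
    (∀ x : ℝ,
      -(iteratedDeriv 2 (uTheta θ) (x : ℂ))
          + Complex.exp (-2 * (θ : ℂ) * Complex.I) * uTheta θ (x : ℂ)
        = Complex.exp (-2 * (θ : ℂ) * Complex.I) / 2 * (uTheta θ (x : ℂ)) ^ 2) ∧
    (∀ z : ℂ, z ∉ poleSet θ → DifferentiableAt ℂ (uTheta θ) z) ∧
    (∀ z ∈ poleSet θ,
      Tendsto (fun w => ‖uTheta θ w‖) (nhdsWithin z {z}ᶜ) atTop) := by
  set a := exp (-θ * I) / 2
  have hu : uTheta θ = soliton a := rfl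
  have hcoeff : exp (-2 * θ * I) = 4 * a ^ 2 := by
    rw [div_pow, ← exp_nat_mul]
    ring_nf
  have hcos := Real.cos_ne_zero_of_abs_le_pi (abs_le.2 ⟨hθ₁.le, hθ₂⟩) hθ₃
  refine ⟨fun x => ?_, fun z hz => ?_, fun z hz => ?_⟩
  · rw [hu, hcoeff, show 4 * a ^ 2 / 2 = 2 * a ^ 2 by ring]
    exact soliton_ode ((cosh_eq_zero_iff_mem_poleSet θ x).not.2 (ofReal_notMem_poleSet hcos x))
  · exact (hasDerivAt_soliton ((cosh_eq_zero_iff_mem_poleSet θ z).not.2 hz)).differentiableAt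
  · exact tendsto_norm_soliton_atTop (by simp) ((cosh_eq_zero_iff_mem_poleSet θ z).2 hz)

theorem sharpness_example (θ : ℝ) (hθ₁ : -Real.pi < θ) (hθ₂ : θ ≤ Real.pi)
    (hθ₃ : |θ| ≠ Real.pi / 2) (hθ₄ : θ ≠ Real.pi) :
    (∀ x : ℝ,
      -(iteratedDeriv 2 (uTheta θ) (x : ℂ))
          + Complex.exp (-2 * (θ : ℂ) * Complex.I) * uTheta θ (x : ℂ)
        = Complex.exp (-2 * (θ : ℂ) * Complex.I) / 2 * (uTheta θ (x : ℂ)) ^ 2) ∧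
    (∀ z : ℂ, z ∉ poleSet θ → DifferentiableAt ℂ (uTheta θ) z) ∧
    (∀ z ∈ poleSet θ,
      Tendsto (fun w => ‖uTheta θ w‖) (nhdsWithin z {z}ᶜ) atTop) :=
  sharpness_example_general θ hθ₁ hθ₂ hθ₃
end
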